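/- arXiv:0708.0390 — 7 statements merged into one kernel-verified Lean document; each statement's English description precedes it below -/
import Mathlib

section
/- Let W be a real random variable whose distribution has a Lebesgue density f that is even and nonincreasing on [0,∞), and let ρ : ℝ → ℝ satisfy condition (A3). Then for every α ∈ ℝ and every s > 0, E[ρ((W − α)/s)] ≥ E[ρ(W/s)]. -/
open MeasureTheory ProbabilityTheory Filter Set
open scoped ENNReal

/-!
The sublevel sets `K = {w | ρ (w / s) ≤ t}` are balanced (symmetric intervals about `0`), so by
the layer-cake formula it suffices to prove Anderson's inequality on the line: `μ (α + K) ≤ μ K`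
for balanced `K`. If `K ≠ ℝ` then `K` is bounded and `α + K` has the same Lebesgue measure.
Points of `K` are closer to `0` than points outside `K`, so the density is at least
`m = ⨅ x ∈ K, g x` on `K \ (α + K)` and at most `m` on `(α + K) \ K`: the mass gained by
translating is at most the mass lost.
-/

theorem Function.Even.le_of_abs_le {β : Type*} [Preorder β] {φ : ℝ → β} (hφ : Function.Even φ)
    (hmono : MonotoneOn φ (Ici 0)) {x y : ℝ} (h : |x| ≤ |y|) : φ x ≤ φ y := by
  have habs : ∀ z, φ z = φ |z| := fun z => by
    rcases abs_choice z with hz | hz <;> rw [hz]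
    exact (hφ z).symm
  rw [habs x, habs y]
  exact hmono (abs_nonneg x) (abs_nonneg y) h

theorem balanced_setOf_le {β : Type*} [Preorder β] {φ : ℝ → β}
    (hφ : ∀ x y, |x| ≤ |y| → φ x ≤ φ y) (t : β) : Balanced ℝ {x | φ x ≤ t} :=
  balanced_iff_smul_mem.2 fun a ha x hx =>
    (hφ _ _ (by simpa [abs_mul] using mul_le_of_le_one_left (abs_nonneg x) ha)).trans hx

theorem Balanced.mem_of_abs_le {K : Set ℝ} (hK : Balanced ℝ K) {x y : ℝ} (hy : y ∈ K)
    (h : |x| ≤ |y|) : x ∈ K := by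
  simpa using hK.smul_mem_mono (a := y) (x := (1 : ℝ)) (by simpa using hy) h

theorem Balanced.abs_lt_of_mem_of_notMem {K : Set ℝ} (hK : Balanced ℝ K) {x y : ℝ} (hx : x ∈ K)
    (hy : y ∉ K) : |x| < |y| :=
  lt_of_not_ge fun h => hy (hK.mem_of_abs_le hx h)

theorem withDensity_preimage_sub_le {g : ℝ → ℝ≥0∞} (hg : ∀ x y, |x| ≤ |y| → g y ≤ g x)
    {K : Set ℝ} (hK : Balanced ℝ K) (hKm : MeasurableSet K) (α : ℝ) :
    volume.withDensity g ((· - α) ⁻¹' K) ≤ volume.withDensity g K := by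
  obtain rfl | hKu := eq_or_ne K univ
  · simp
  obtain ⟨y, hy⟩ := (ne_univ_iff_exists_notMem K).1 hKu
  set ν := volume.withDensity g
  set A := (· - α) ⁻¹' K
  have hAm : MeasurableSet A := measurable_sub_const α hKm
  have hKfin : volume K ≠ ∞ := by
    refine ne_top_of_le_ne_top (measure_Ioo_lt_top (a := -|y|) (b := |y|)).ne (measure_mono ?_)
    exact fun x hx => abs_lt.1 (hK.abs_lt_of_mem_of_notMem hx hy)
  have hvol : volume (A \ K) = volume (K \ A) :=
    measure_sdiff_symm hAm.nullMeasurableSet hKm.nullMeasurableSet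
      (measure_preimage_add_right volume (-α) K)
      (ne_top_of_le_ne_top hKfin (measure_mono inter_subset_right))
  set m := ⨅ x ∈ K, g x
  have hout : ∀ y ∉ K, g y ≤ m := fun y hy =>
    le_iInf₂ fun x hx => hg x y (hK.abs_lt_of_mem_of_notMem hx hy).le
  calc ν A = ν (A ∩ K) + ν (A \ K) := (measure_inter_add_sdiff A hKm).symm
    _ ≤ ν (A ∩ K) + m * volume (A \ K) := by
      gcongr
      rw [withDensity_apply _ (hAm.diff hKm), ← setLIntegral_const]
      exact setLIntegral_mono' (hAm.diff hKm) fun y hy => hout y hy.2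
    _ = ν (A ∩ K) + m * volume (K \ A) := by rw [hvol]
    _ ≤ ν (K ∩ A) + ν (K \ A) := by
      rw [inter_comm]
      gcongr
      rw [withDensity_apply _ (hKm.diff hAm), ← setLIntegral_const]
      exact setLIntegral_mono' (hKm.diff hAm) fun x hx => iInf₂_le x hx.1
    _ = ν K := measure_inter_add_sdiff K hAm

theorem integral_le_integral_of_measure_setOf_le_le {Ω : Type*} [MeasurableSpace Ω]
    {μ : Measure Ω} [IsFiniteMeasure μ] {f₁ f₂ : Ω → ℝ} (hf₁ : 0 ≤ f₁) (hf₂ : 0 ≤ f₂)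
    (hf₁m : Measurable f₁) (hf₂m : Measurable f₂) (hf₂i : Integrable f₂ μ)
    (h : ∀ t, μ {x | f₂ x ≤ t} ≤ μ {x | f₁ x ≤ t}) : ∫ x, f₁ x ∂μ ≤ ∫ x, f₂ x ∂μ := by
  have hlt : ∀ t, μ {x | t < f₁ x} ≤ μ {x | t < f₂ x} := fun t => by
    have hc : ∀ f : Ω → ℝ, Measurable f → μ {x | t < f x} = μ univ - μ {x | f x ≤ t} :=
      fun f hf => by
        rw [← measure_compl (measurableSet_le hf measurable_const) (measure_ne_top μ _)]
        simp [compl_ofPred]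
    rw [hc f₁ hf₁m, hc f₂ hf₂m]
    exact tsub_le_tsub_left (h t) _
  rw [integral_eq_lintegral_of_nonneg_ae (.of_forall hf₁) hf₁m.aestronglyMeasurable,
    integral_eq_lintegral_of_nonneg_ae (.of_forall hf₂) hf₂m.aestronglyMeasurable]
  refine ENNReal.toReal_mono
    ((lintegral_ofReal_ne_top_iff_integrable hf₂m.aestronglyMeasurable (.of_forall hf₂)).2 hf₂i) ?_
  rw [lintegral_eq_lintegral_meas_lt μ (.of_forall hf₁) hf₁m.aemeasurable,
    lintegral_eq_lintegral_meas_lt μ (.of_forall hf₂) hf₂m.aemeasurable]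
  exact setLIntegral_mono' measurableSet_Ioi fun t _ => hlt t

theorem stmt1_general (ρ : ℝ → ℝ)
    (hρ_meas : Measurable ρ)
    (hρ_even : ∀ u, ρ (-u) = ρ u)
    (hρ_mono : MonotoneOn ρ (Set.Ici 0))
    (hρ_bdd : ∀ u, 0 ≤ ρ u ∧ ρ u ≤ 1)
    (f : ℝ → ℝ)
    (hf_even : ∀ x, f (-x) = f x)
    (hf_anti : AntitoneOn f (Set.Ici 0))
    (μ : Measure ℝ)
    (hμ : μ = volume.withDensity fun x => ENNReal.ofReal (f x))
    (hμ_prob : IsProbabilityMeasure μ)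
    (α s : ℝ) :
    ∫ w, ρ (w / s) ∂μ ≤ ∫ w, ρ ((w - α) / s) ∂μ := by
  have hρs : ∀ x y, |x| ≤ |y| → ρ (x / s) ≤ ρ (y / s) := fun x y h =>
    Function.Even.le_of_abs_le hρ_even hρ_mono <| by
      simpa only [abs_div] using div_le_div_of_nonneg_right h (abs_nonneg s)
  have hf : ∀ x y, |x| ≤ |y| → ENNReal.ofReal (f y) ≤ ENNReal.ofReal (f x) := fun x y h =>
    ENNReal.ofReal_le_ofReal <|
      Function.Even.le_of_abs_le (φ := OrderDual.toDual ∘ f) hf_even hf_anti.dual_right h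
  have hρsm : Measurable fun w => ρ (w / s) := by fun_prop
  have hραm : Measurable fun w => ρ ((w - α) / s) := by fun_prop
  refine integral_le_integral_of_measure_setOf_le_le (fun w => (hρ_bdd _).1)
    (fun w => (hρ_bdd _).1) hρsm hραm
    (.of_bound hραm.aestronglyMeasurable 1 (.of_forall fun w => ?_)) fun t => ?_
  · simpa [abs_of_nonneg (hρ_bdd _).1] using (hρ_bdd _).2
  · subst hμ
    exact withDensity_preimage_sub_le hf (balanced_setOf_le hρs t)
      (measurableSet_le hρsm measurable_const) α

/-- If W has an even density f nonincreasing on [0,∞) and ρ satisfies (A3),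
then for every α ∈ ℝ and s > 0, E[ρ((W − α)/s)] ≥ E[ρ(W/s)]. -/
theorem stmt1 (ρ : ℝ → ℝ)
    (hρ_meas : Measurable ρ)
    (hρ_even : ∀ u, ρ (-u) = ρ u)
    (hρ_mono : MonotoneOn ρ (Set.Ici 0))
    (hρ_zero : ρ 0 = 0)
    (hρ_bdd : ∀ u, 0 ≤ ρ u ∧ ρ u ≤ 1)
    (hρ_lim : Tendsto ρ atTop (nhds 1))
    (f : ℝ → ℝ)
    (hf_meas : Measurable f)
    (hf_nonneg : ∀ x, 0 ≤ f x)
    (hf_even : ∀ x, f (-x) = f x)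
    (hf_anti : AntitoneOn f (Set.Ici 0))
    (μ : Measure ℝ)
    (hμ : μ = volume.withDensity fun x => ENNReal.ofReal (f x))
    (hμ_prob : IsProbabilityMeasure μ)
    (α s : ℝ) (hs : 0 < s) :
    ∫ w, ρ (w / s) ∂μ ≤ ∫ w, ρ ((w - α) / s) ∂μ :=
  stmt1_general ρ hρ_meas hρ_even hρ_mono hρ_bdd f hf_even hf_anti μ hμ hμ_prob α s
end

section
/- Let ρ satisfy (A3), let 0 < ε < b < 1, and let H = (1−ε)H₀ + εH* ∈ V_ε under the Gaussian model. Define the S-scale σ_S(H) = inf{ σ > 0 : there exist α ∈ ℝ and θ ∈ ℝ^p with ∫ ρ((y − α − x'θ)/σ) dH(y,x) ≤ b }. Then γ_{b,ε} ≤ σ_S(H) ≤ σ_{b,ε}. -/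
/-!
Write `g σ = ∫ ρ (z / σ) dΦ(z)`. Under `H₀` the residual of a fit `(α, θ)` is `y - c(x)` with
`y ~ N(0, 1)` independent of `x`, and shifting a centred Gaussian can only increase the integral of
the symmetric, radially nondecreasing `ρ (· / σ)` (Anderson's inequality in dimension one: by the
layer-cake formula it reduces to the fact that a centred interval carries more Gaussian mass than
any translate of it). Hence every admissible `σ` satisfies `(1 - ε) g σ ≤ b = (1 - ε) g γ`, and
`σ ≥ γ` because `g` is strictly decreasing: were `g σ = g σ'` with `σ < σ'`, `ρ` would be
a.e. invariant under the dilation by `σ' / σ`, hence a.e. equal to its limit `1`, and then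
`g σ_{b,ε} = 1`. Conversely `σ_{b,ε}` is admissible with `α = 0`, `θ = 0`, since the contaminating
part of `H` contributes at most `ε`.
-/

open MeasureTheory ProbabilityTheory Filter Set
open scoped NNReal ENNReal Topology

section GaussianIntervals

variable {v : ℝ≥0}

lemma gaussianPDF_zero_le_of_sq_le {x y : ℝ} (h : x ^ 2 ≤ y ^ 2) :
    gaussianPDF 0 v y ≤ gaussianPDF 0 v x := by
  simp only [gaussianPDF, gaussianPDFReal, sub_zero]
  gcongr

lemma gaussianReal_Ioc_add_le (hv : v ≠ 0) {u w d : ℝ}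
    (h : ∀ x ∈ Ioc u w, x ^ 2 ≤ (x + d) ^ 2) :
    gaussianReal 0 v (Ioc (u + d) (w + d)) ≤ gaussianReal 0 v (Ioc u w) := by
  have hpre : (· + d) ⁻¹' Ioc (u + d) (w + d) = Ioc u w := by simp
  have htrans := (measurePreserving_add_right volume d).setLIntegral_comp_preimage_emb
    (MeasurableEquiv.addRight d).measurableEmbedding (gaussianPDF 0 v) (Ioc (u + d) (w + d))
  rw [gaussianReal_apply _ hv, gaussianReal_apply _ hv, ← htrans, hpre]
  exact setLIntegral_mono' measurableSet_Ioc
    fun x hx ↦ gaussianPDF_zero_le_of_sq_le (h x hx)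

lemma gaussianReal_Ioc_le_of_nonneg (hv : v ≠ 0) {a c : ℝ} (ha : 0 ≤ a) (hc : 0 ≤ c) :
    gaussianReal 0 v (Ioc (c - a) (c + a)) ≤ gaussianReal 0 v (Ioc (-a) a) := by
  set μ := gaussianReal 0 v
  have hshift : μ (Ioc a (c + a)) ≤ μ (Ioc (-a) (c - a)) := by
    have := gaussianReal_Ioc_add_le hv (u := -a) (w := c - a) (d := 2 * a)
      fun x hx ↦ by nlinarith [hx.1]
    rwa [show -a + 2 * a = a by ring, show c - a + 2 * a = c + a by ring] at this
  have hsplit : μ (Ioc (-a) a) + μ (Ioc a (c + a)) =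
      μ (Ioc (-a) (c - a)) + μ (Ioc (c - a) (c + a)) := by
    rw [← measure_union (Ioc_disjoint_Ioc_of_le le_rfl) measurableSet_Ioc,
      ← measure_union (Ioc_disjoint_Ioc_of_le le_rfl) measurableSet_Ioc,
      Ioc_union_Ioc_eq_Ioc (by linarith) (by linarith),
      Ioc_union_Ioc_eq_Ioc (by linarith) (by linarith)]
  refine ENNReal.le_of_add_le_add_left (measure_ne_top μ (Ioc a (c + a))) ?_
  calc μ (Ioc a (c + a)) + μ (Ioc (c - a) (c + a))
      ≤ μ (Ioc (-a) (c - a)) + μ (Ioc (c - a) (c + a)) := by gcongr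
    _ = μ (Ioc a (c + a)) + μ (Ioc (-a) a) := by rw [← hsplit, add_comm]

lemma gaussianReal_Icc_le (hv : v ≠ 0) (a c : ℝ) :
    gaussianReal 0 v (Icc (c - a) (c + a)) ≤ gaussianReal 0 v (Icc (-a) a) := by
  wlog hc : 0 ≤ c generalizing c
  · have hneg : gaussianReal 0 v (Icc (c - a) (c + a)) =
        gaussianReal 0 v (Icc (-c - a) (-c + a)) := by
      conv_lhs => rw [← neg_zero, ← gaussianReal_map_neg]
      rw [Measure.map_apply measurable_neg measurableSet_Icc]
      congr 1
      ext x
      simp only [mem_preimage, mem_Icc]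
      constructor <;> rintro ⟨h1, h2⟩ <;> constructor <;> linarith
    exact hneg ▸ this (-c) (by linarith)
  rcases lt_or_ge a 0 with ha | ha
  · simp [Icc_eq_empty_of_lt (by linarith : c + a < c - a)]
  have := nullSingletonClass_gaussianReal (μ := 0) hv
  rw [← measure_congr Ioc_ae_eq_Icc, ← measure_congr Ioc_ae_eq_Icc]
  exact gaussianReal_Ioc_le_of_nonneg hv ha hc

end GaussianIntervals

section EvenMonotone

variable {f : ℝ → ℝ}

lemma Function.Even.apply_abs (hf : f.Even) (u : ℝ) : f |u| = f u := by
  rcases abs_choice u with h | h <;> rw [h]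
  exact hf u

lemma Function.Even.le_of_abs_le_s2 (hf : f.Even) (hmono : MonotoneOn f (Ici 0)) {u w : ℝ}
    (h : |u| ≤ |w|) : f u ≤ f w := by
  rw [← hf.apply_abs u, ← hf.apply_abs w]
  exact hmono (abs_nonneg u) (abs_nonneg w) h

lemma Function.Even.apply_div_le_apply_div (hf : f.Even) (hmono : MonotoneOn f (Ici 0))
    (z : ℝ) {s s' : ℝ} (hs : 0 < s) (hss : s ≤ s') : f (z / s') ≤ f (z / s) :=
  hf.le_of_abs_le_s2 hmono <| by
    rw [abs_div, abs_div, abs_of_pos hs, abs_of_pos (hs.trans_le hss)]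
    gcongr

variable {v : ℝ≥0}

lemma gaussianReal_setOf_lt_le_comp_sub (hv : v ≠ 0) (hf : f.Even) (hmono : MonotoneOn f (Ici 0))
    (t c : ℝ) : gaussianReal 0 v {z | t < f z} ≤ gaussianReal 0 v {z | t < f (z - c)} := by
  set μ := gaussianReal 0 v
  set A := {u : ℝ | 0 ≤ u ∧ t < f u}
  have habs_mem : ∀ z, t < f z → |z| ∈ A := fun z hz ↦ ⟨abs_nonneg z, by rwa [hf.apply_abs]⟩
  rcases A.eq_empty_or_nonempty with hA | hA
  · have : {z | t < f z} = ∅ :=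
      eq_empty_of_forall_notMem fun z hz ↦ by simpa [hA] using habs_mem z hz
    simp [this]
  -- `A` is `[r, ∞)` or `(r, ∞)`; the difference is invisible to the Gaussian measure.
  set r := sInf A
  have hsub : {z | t < f z} ⊆ (Ioo (-r) r)ᶜ := fun z hz ↦ by
    rw [mem_compl_iff, mem_Ioo, ← abs_lt, not_lt]
    exact csInf_le ⟨0, fun u hu ↦ hu.1⟩ (habs_mem z hz)
  have hsup : (Icc (c - r) (c + r))ᶜ ⊆ {z | t < f (z - c)} := fun z hz ↦ by
    have hr : r < |z - c| := by
      contrapose! hz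
      obtain ⟨h₁, h₂⟩ := abs_le.mp hz
      exact not_notMem.mpr ⟨by linarith, by linarith⟩
    obtain ⟨u, hu, hur⟩ := exists_lt_of_csInf_lt hA hr
    exact hu.2.trans_le (hf.le_of_abs_le_s2 hmono (by rw [abs_of_nonneg hu.1]; exact hur.le))
  have := nullSingletonClass_gaussianReal (μ := 0) hv
  calc μ {z | t < f z} ≤ μ (Ioo (-r) r)ᶜ := measure_mono hsub
    _ = 1 - μ (Icc (-r) r) := by
      rw [prob_compl_eq_one_sub measurableSet_Ioo, measure_congr Ioo_ae_eq_Icc]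
    _ ≤ 1 - μ (Icc (c - r) (c + r)) := tsub_le_tsub_left (gaussianReal_Icc_le hv r c) 1
    _ = μ (Icc (c - r) (c + r))ᶜ := (prob_compl_eq_one_sub measurableSet_Icc).symm
    _ ≤ μ {z | t < f (z - c)} := measure_mono hsup

lemma integral_le_integral_comp_sub (hv : v ≠ 0) (hf : f.Even) (hmono : MonotoneOn f (Ici 0))
    (hmeas : Measurable f) (hf0 : ∀ u, 0 ≤ f u) (c : ℝ)
    (hfi : Integrable (fun z ↦ f (z - c)) (gaussianReal 0 v)) :
    ∫ z, f z ∂gaussianReal 0 v ≤ ∫ z, f (z - c) ∂gaussianReal 0 v := by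
  have hmeas' : Measurable fun z ↦ f (z - c) := hmeas.comp (measurable_sub_const c)
  rw [integral_eq_lintegral_of_nonneg_ae (ae_of_all _ hf0) hmeas.aestronglyMeasurable,
    integral_eq_lintegral_of_nonneg_ae (ae_of_all _ fun z ↦ hf0 (z - c))
      hmeas'.aestronglyMeasurable]
  refine ENNReal.toReal_mono hfi.lintegral_lt_top.ne ?_
  rw [lintegral_eq_lintegral_meas_lt _ (ae_of_all _ hf0) hmeas.aemeasurable,
    lintegral_eq_lintegral_meas_lt _ (ae_of_all _ fun z ↦ hf0 (z - c)) hmeas'.aemeasurable]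
  exact lintegral_mono fun t ↦ gaussianReal_setOf_lt_le_comp_sub hv hf hmono t c

end EvenMonotone

lemma integrable_of_nonneg_of_le_one {X : Type*} [MeasurableSpace X] {μ : Measure X}
    [IsFiniteMeasure μ] {f : X → ℝ} (hf : Measurable f) (hf0 : ∀ x, 0 ≤ f x)
    (hf1 : ∀ x, f x ≤ 1) : Integrable f μ :=
  .of_bound hf.aestronglyMeasurable 1 <| ae_of_all _ fun x ↦ by
    rw [Real.norm_of_nonneg (hf0 x)]
    exact hf1 x

lemma integral_mixture {X : Type*} [MeasurableSpace X] {μ ν : Measure X} {f : X → ℝ}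
    (hfμ : Integrable f μ) (hfν : Integrable f ν) {a b : ℝ} (ha : 0 ≤ a) (hb : 0 ≤ b) :
    ∫ x, f x ∂(ENNReal.ofReal a • μ + ENNReal.ofReal b • ν) =
      a * ∫ x, f x ∂μ + b * ∫ x, f x ∂ν := by
  rw [integral_add_measure (hfμ.smul_measure ENNReal.ofReal_ne_top)
      (hfν.smul_measure ENNReal.ofReal_ne_top), integral_smul_measure, integral_smul_measure,
    ENNReal.toReal_ofReal ha, ENNReal.toReal_ofReal hb, smul_eq_mul, smul_eq_mul]

lemma integral_contamination_fst_le {X : Type*} [MeasurableSpace X] {μ : Measure ℝ}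
    [IsProbabilityMeasure μ] {ν : Measure X} [IsProbabilityMeasure ν] {H' : Measure (ℝ × X)}
    [IsProbabilityMeasure H'] {ε : ℝ} (hε0 : 0 ≤ ε) (hε1 : ε ≤ 1) {f : ℝ → ℝ}
    (hf : Measurable f) (hf0 : ∀ u, 0 ≤ f u) (hf1 : ∀ u, f u ≤ 1) :
    ∫ yx, f yx.1 ∂(ENNReal.ofReal (1 - ε) • μ.prod ν + ENNReal.ofReal ε • H') ≤
      (1 - ε) * ∫ y, f y ∂μ + ε := by
  have hi : ∀ ξ : Measure (ℝ × X), IsFiniteMeasure ξ → Integrable (fun yx ↦ f yx.1) ξ :=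
    fun _ _ ↦ integrable_of_nonneg_of_le_one (hf.comp measurable_fst) (fun _ ↦ hf0 _)
      fun _ ↦ hf1 _
  have hH' : ∫ yx, f yx.1 ∂H' ≤ 1 := by
    calc ∫ yx, f yx.1 ∂H' ≤ ∫ _, 1 ∂H' :=
          integral_mono (hi H' inferInstance) (integrable_const 1) fun _ ↦ hf1 _
      _ = 1 := by simp
  rw [integral_mixture (hi _ inferInstance) (hi H' inferInstance) (sub_nonneg.2 hε1) hε0,
    integral_fun_fst, probReal_univ, one_smul]
  gcongr
  exact mul_le_of_le_one_right hε0 hH'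

lemma Real.ae_const_mul {P : ℝ → Prop} (h : ∀ᵐ u, P u) {r : ℝ} (hr : r ≠ 0) :
    ∀ᵐ u, P (r * u) := by
  simpa only [smul_eq_mul] using (Measure.quasiMeasurePreserving_smul volume hr).ae h

lemma ae_pos_eq_one_of_ae_comp_mul_eq {f : ℝ → ℝ} {κ : ℝ} (hκ : 1 < κ)
    (hf : ∀ᵐ u, f (κ * u) = f u) (hlim : Tendsto f atTop (𝓝 1)) : ∀ᵐ u, 0 < u → f u = 1 := by
  have hpow : ∀ n : ℕ, ∀ᵐ u, f (κ * (κ ^ n * u)) = f (κ ^ n * u) := fun n ↦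
    Real.ae_const_mul hf (pow_ne_zero n (by positivity))
  filter_upwards [ae_all_iff.2 hpow] with u hu hupos
  have hiter : ∀ n : ℕ, f (κ ^ n * u) = f u := by
    intro n
    induction n with
    | zero => simp
    | succ n ih => rw [pow_succ', mul_assoc, hu n, ih]
  have hto : Tendsto (fun n : ℕ ↦ f (κ ^ n * u)) atTop (𝓝 1) :=
    hlim.comp ((tendsto_pow_atTop_atTop_of_one_lt hκ).atTop_mul_const hupos)
  simp only [hiter] at hto
  exact tendsto_nhds_unique tendsto_const_nhds hto

lemma integral_div_eq_one_of_ae_eq_one {f : ℝ → ℝ} {v : ℝ≥0} (hv : v ≠ 0)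
    (h : ∀ᵐ u, f u = 1) {σ : ℝ} (hσ : σ ≠ 0) :
    ∫ z, f (z / σ) ∂gaussianReal 0 v = 1 := by
  have hσ' : ∀ᵐ z, f (z / σ) = 1 := by
    filter_upwards [Real.ae_const_mul h (inv_ne_zero hσ)] with z hz
    rwa [inv_mul_eq_div] at hz
  simp [integral_congr_ae ((gaussianReal_absolutelyContinuous 0 hv).ae_le hσ')]

/-- Condition (A3) without `ρ 0 = 0` and `ρ u → 1`. -/
structure IsBoundedRhoFunction (f : ℝ → ℝ) : Prop where
  measurable : Measurable f
  even : f.Even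
  monotoneOn : MonotoneOn f (Ici 0)
  nonneg : ∀ u, 0 ≤ f u
  le_one : ∀ u, f u ≤ 1

namespace IsBoundedRhoFunction

variable {f : ℝ → ℝ} {v : ℝ≥0}

lemma comp_div (hf : IsBoundedRhoFunction f) {σ : ℝ} (hσ : 0 < σ) :
    IsBoundedRhoFunction fun u ↦ f (u / σ) where
  measurable := hf.measurable.comp (measurable_id.div_const σ)
  even := hf.even.comp_odd fun u ↦ neg_div σ u
  monotoneOn := fun _ hu _ hw huw ↦ hf.monotoneOn (div_nonneg hu hσ.le) (div_nonneg hw hσ.le)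
    (div_le_div_of_nonneg_right huw hσ.le)
  nonneg _ := hf.nonneg _
  le_one _ := hf.le_one _

lemma integrable {X : Type*} [MeasurableSpace X] {μ : Measure X} [IsFiniteMeasure μ]
    (hf : IsBoundedRhoFunction f) {m : X → ℝ} (hm : Measurable m) :
    Integrable (fun x ↦ f (m x)) μ :=
  integrable_of_nonneg_of_le_one (hf.measurable.comp hm) (fun _ ↦ hf.nonneg _)
    fun _ ↦ hf.le_one _

lemma integral_le_integral_prod_comp_sub (hf : IsBoundedRhoFunction f) (hv : v ≠ 0)
    {X : Type*} [MeasurableSpace X] (ν : Measure X) [IsProbabilityMeasure ν] {m : X → ℝ}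
    (hm : Measurable m) :
    ∫ y, f y ∂gaussianReal 0 v ≤ ∫ yx, f (yx.1 - m yx.2) ∂(gaussianReal 0 v).prod ν := by
  have hFi : Integrable (fun yx : ℝ × X ↦ f (yx.1 - m yx.2)) ((gaussianReal 0 v).prod ν) :=
    hf.integrable (measurable_fst.sub (hm.comp measurable_snd))
  rw [integral_prod_symm _ hFi]
  calc ∫ y, f y ∂gaussianReal 0 v = ∫ _, ∫ y, f y ∂gaussianReal 0 v ∂ν := by simp
    _ ≤ ∫ x, ∫ y, f (y - m x) ∂gaussianReal 0 v ∂ν :=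
      integral_mono (integrable_const _) hFi.integral_prod_right fun x ↦
        integral_le_integral_comp_sub hv hf.even hf.monotoneOn hf.measurable hf.nonneg _
          (hf.integrable (measurable_sub_const _))

lemma ae_eq_one_of_integral_div_eq (hf : IsBoundedRhoFunction f)
    (hlim : Tendsto f atTop (𝓝 1)) (hv : v ≠ 0) {s s' : ℝ} (hs : 0 < s) (hss : s < s')
    (heq : ∫ z, f (z / s) ∂gaussianReal 0 v = ∫ z, f (z / s') ∂gaussianReal 0 v) :
    ∀ᵐ u, f u = 1 := by
  have hs' : 0 < s' := hs.trans hss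
  have hae : ∀ᵐ z, f (z / s') = f (z / s) :=
    (gaussianReal_absolutelyContinuous' 0 hv).ae_le <|
      (integral_eq_iff_of_ae_le (hf.integrable (measurable_id.div_const s'))
        (hf.integrable (measurable_id.div_const s))
        (ae_of_all _ fun z ↦ hf.even.apply_div_le_apply_div hf.monotoneOn z hs hss.le)).1 heq.symm
  have hdil : ∀ᵐ u, f (s' / s * u) = f u := by
    filter_upwards [Real.ae_const_mul hae hs'.ne'] with u hu
    rw [mul_div_cancel_left₀ u hs'.ne', mul_comm, mul_div_assoc] at hu
    rw [mul_comm, hu]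
  have hpos := ae_pos_eq_one_of_ae_comp_mul_eq ((one_lt_div hs).2 hss) hdil hlim
  filter_upwards [hpos, Real.ae_const_mul hpos (neg_ne_zero.2 one_ne_zero),
    Measure.ae_ne volume 0] with u hu hneg hu0
  rcases hu0.lt_or_gt with hlt | hgt
  · rw [← hf.even u, ← hneg (by linarith), neg_one_mul]
  · exact hu hgt

lemma integral_div_lt_or_forall_eq_one (hf : IsBoundedRhoFunction f)
    (hlim : Tendsto f atTop (𝓝 1)) (hv : v ≠ 0) {s s' : ℝ} (hs : 0 < s) (hss : s < s') :
    ∫ z, f (z / s') ∂gaussianReal 0 v < ∫ z, f (z / s) ∂gaussianReal 0 v ∨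
      ∀ σ ≠ 0, ∫ z, f (z / σ) ∂gaussianReal 0 v = 1 := by
  have hle : ∫ z, f (z / s') ∂gaussianReal 0 v ≤ ∫ z, f (z / s) ∂gaussianReal 0 v :=
    integral_mono (hf.integrable (measurable_id.div_const s'))
      (hf.integrable (measurable_id.div_const s))
      fun z ↦ hf.even.apply_div_le_apply_div hf.monotoneOn z hs hss.le
  refine hle.lt_or_eq.imp_right fun heq σ hσ ↦ integral_div_eq_one_of_ae_eq_one hv ?_ hσ
  exact hf.ae_eq_one_of_integral_div_eq hlim hv hs hss heq.symm

lemma le_integral_contamination (hf : IsBoundedRhoFunction f) (hv : v ≠ 0)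
    {X : Type*} [MeasurableSpace X] {ν : Measure X}
    [IsProbabilityMeasure ν] {H' : Measure (ℝ × X)} [IsFiniteMeasure H'] {ε : ℝ} (hε0 : 0 ≤ ε)
    (hε1 : ε ≤ 1) {m : X → ℝ} (hm : Measurable m) :
    (1 - ε) * ∫ y, f y ∂gaussianReal 0 v ≤
      ∫ yx, f (yx.1 - m yx.2) ∂(ENNReal.ofReal (1 - ε) • (gaussianReal 0 v).prod ν +
        ENNReal.ofReal ε • H') := by
  have hm' : Measurable fun yx : ℝ × X ↦ yx.1 - m yx.2 :=
    measurable_fst.sub (hm.comp measurable_snd)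
  rw [integral_mixture (hf.integrable hm') (hf.integrable hm') (sub_nonneg.2 hε1) hε0]
  calc (1 - ε) * ∫ y, f y ∂gaussianReal 0 v
      ≤ (1 - ε) * ∫ yx, f (yx.1 - m yx.2) ∂(gaussianReal 0 v).prod ν := by
        gcongr
        exact hf.integral_le_integral_prod_comp_sub hv ν hm
    _ ≤ _ := le_add_of_nonneg_right <| mul_nonneg hε0 <| integral_nonneg fun _ ↦ hf.nonneg _

end IsBoundedRhoFunction

theorem stmt2_general (p : ℕ) (ρ : ℝ → ℝ)
    (hρ_meas : Measurable ρ)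
    (hρ_even : ∀ u, ρ (-u) = ρ u)
    (hρ_mono : MonotoneOn ρ (Set.Ici 0))
    (hρ_bdd : ∀ u, 0 ≤ ρ u ∧ ρ u ≤ 1)
    (hρ_lim : Tendsto ρ atTop (nhds 1))
    (g : ℝ → ℝ)
    (hg : ∀ s, 0 < s → g s = ∫ z, ρ (z / s) ∂(gaussianReal 0 1))
    (b ε : ℝ) (hε : 0 < ε) (hεb : ε < b) (hb : b < 1)
    (σbε γbε : ℝ) (hσ_pos : 0 < σbε)
    (hσ : g σbε = (b - ε) / (1 - ε)) (hγ : g γbε = b / (1 - ε))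
    (Hstar : Measure (ℝ × (Fin p → ℝ))) (hHstar : IsProbabilityMeasure Hstar)
    (H : Measure (ℝ × (Fin p → ℝ)))
    (hH : H = ENNReal.ofReal (1 - ε) •
        ((gaussianReal 0 1).prod (Measure.pi fun _ : Fin p => gaussianReal 0 1)) +
        ENNReal.ofReal ε • Hstar)
    (σS : ℝ)
    (hσS : σS = sInf {σ : ℝ | 0 < σ ∧ ∃ α : ℝ, ∃ θ : Fin p → ℝ,
        ∫ yx, ρ ((yx.1 - α - ∑ i, θ i * yx.2 i) / σ) ∂H ≤ b}) :
    γbε ≤ σS ∧ σS ≤ σbε := by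
  have hε1 : ε < 1 := hεb.trans hb
  have hρ : IsBoundedRhoFunction ρ :=
    ⟨hρ_meas, hρ_even, hρ_mono, fun u ↦ (hρ_bdd u).1, fun u ↦ (hρ_bdd u).2⟩
  rw [hσS]
  refine ⟨le_csInf ⟨σbε, ?mem⟩ fun σ ⟨hσ0, α, θ, hrisk⟩ ↦ ?lower,
    csInf_le ⟨0, fun _ h ↦ h.1.le⟩ ?mem⟩
  case mem =>
    refine ⟨hσ_pos, 0, 0, ?_⟩
    have hρσ := hρ.comp_div hσ_pos
    simp only [sub_zero, Pi.zero_apply, zero_mul, Finset.sum_const_zero, hH]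
    calc _ ≤ (1 - ε) * g σbε + ε := by
          rw [hg σbε hσ_pos]
          exact integral_contamination_fst_le hε.le hε1.le hρσ.measurable hρσ.nonneg hρσ.le_one
      _ = b := by rw [hσ, mul_div_cancel₀ _ (by linarith : 1 - ε ≠ 0)]; ring
  case lower =>
    by_contra! hσγ
    have hgσ : (1 - ε) * g σ ≤ b := by
      refine le_trans ?_ hrisk
      simp only [hg σ hσ0, hH, sub_sub]
      exact (hρ.comp_div hσ0).le_integral_contamination one_ne_zero hε.le hε1.le
        (m := fun x : Fin p → ℝ ↦ α + ∑ i, θ i * x i) (by fun_prop)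
    rcases hρ.integral_div_lt_or_forall_eq_one hρ_lim one_ne_zero hσ0 hσγ with hlt | hone
    · rw [← hg σ hσ0, ← hg γbε (hσ0.trans hσγ), hγ, div_lt_iff₀ (by linarith)] at hlt
      linarith
    · have h1 := hone σbε hσ_pos.ne'
      rw [← hg σbε hσ_pos, hσ, div_eq_one_iff_eq (by linarith)] at h1
      linarith

/-- Under the Gaussian model, for any H ∈ V_ε the S-scale σ_S(H) satisfies
γ_{b,ε} ≤ σ_S(H) ≤ σ_{b,ε}. -/
theorem stmt2 (p : ℕ) (hp : 1 ≤ p) (ρ : ℝ → ℝ)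
    (hρ_meas : Measurable ρ)
    (hρ_even : ∀ u, ρ (-u) = ρ u)
    (hρ_mono : MonotoneOn ρ (Set.Ici 0))
    (hρ_zero : ρ 0 = 0)
    (hρ_bdd : ∀ u, 0 ≤ ρ u ∧ ρ u ≤ 1)
    (hρ_lim : Tendsto ρ atTop (nhds 1))
    (g : ℝ → ℝ)
    (hg : ∀ s, 0 < s → g s = ∫ z, ρ (z / s) ∂(gaussianReal 0 1))
    (b ε : ℝ) (hε : 0 < ε) (hεb : ε < b) (hb : b < 1)
    (σbε γbε : ℝ) (hσ_pos : 0 < σbε) (hγ_pos : 0 < γbε)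
    (hσ : g σbε = (b - ε) / (1 - ε)) (hγ : g γbε = b / (1 - ε))
    (Hstar : Measure (ℝ × (Fin p → ℝ))) (hHstar : IsProbabilityMeasure Hstar)
    (H : Measure (ℝ × (Fin p → ℝ)))
    (hH : H = ENNReal.ofReal (1 - ε) •
        ((gaussianReal 0 1).prod (Measure.pi fun _ : Fin p => gaussianReal 0 1)) +
        ENNReal.ofReal ε • Hstar)
    (σS : ℝ)
    (hσS : σS = sInf {σ : ℝ | 0 < σ ∧ ∃ α : ℝ, ∃ θ : Fin p → ℝ,
        ∫ yx, ρ ((yx.1 - α - ∑ i, θ i * yx.2 i) / σ) ∂H ≤ b}) :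
    γbε ≤ σS ∧ σS ≤ σbε :=
  stmt2_general p ρ hρ_meas hρ_even hρ_mono hρ_bdd hρ_lim g hg b ε hε hεb hb σbε γbε hσ_pos hσ hγ
    Hstar hHstar H hH σS hσS
end

section
/- Let ρ satisfy (A3) and suppose g satisfies (A4). Then for every t > 0 and every interval [a, c] with 0 < a ≤ c < ∞, inf_{s ∈ [a,c]} [ g(s/(1+t²)^{1/2}) − g(s) ] = min{ g(a/(1+t²)^{1/2}) − g(a), g(c/(1+t²)^{1/2}) − g(c) }; that is, the infimum of s ↦ g(s/(1+t²)^{1/2}) − g(s) over [a, c] is attained at one of the two endpoints. -/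
open MeasureTheory ProbabilityTheory Filter Set

/-- Under (A3) and (A4), for every t > 0, the infimum of
s ↦ g(s/√(1+t²)) − g(s) over a compact interval [a, c] ⊆ (0,∞) is attained at an endpoint. -/
theorem stmt4 (ρ : ℝ → ℝ)
    (hρ_meas : Measurable ρ)
    (hρ_even : ∀ u, ρ (-u) = ρ u)
    (hρ_mono : MonotoneOn ρ (Set.Ici 0))
    (hρ_zero : ρ 0 = 0)
    (hρ_bdd : ∀ u, 0 ≤ ρ u ∧ ρ u ≤ 1)
    (hρ_lim : Tendsto ρ atTop (nhds 1))
    (g : ℝ → ℝ)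
    (hg : ∀ s, 0 < s → g s = ∫ z, ρ (z / s) ∂(gaussianReal 0 1))
    -- Condition (A4):
    (g' : ℝ → ℝ)
    (hg_deriv : ∀ s ∈ Set.Ioi (0 : ℝ), HasDerivAt g (g' s) s)
    (hg'_cont : ContinuousOn g' (Set.Ioi 0))
    (φ : ℝ → ℝ) (hφ : ∀ s, φ s = -s * g' s)
    (hφ_pos : ∀ s ∈ Set.Ioi (0 : ℝ), 0 < φ s)
    (σM : ℝ) (hσM : 0 < σM)
    (hφ_mono : MonotoneOn φ (Set.Ioc 0 σM))
    (hφ_anti : AntitoneOn φ (Set.Ici σM)) :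
    ∀ t : ℝ, 0 < t → ∀ a c : ℝ, 0 < a → a ≤ c →
      sInf ((fun s => g (s / Real.sqrt (1 + t ^ 2)) - g s) '' Set.Icc a c) =
        min (g (a / Real.sqrt (1 + t ^ 2)) - g a) (g (c / Real.sqrt (1 + t ^ 2)) - g c) := by

  intro t ht a c ha hac
  set τ := Real.sqrt (1 + t ^ 2) with hτdef
  have hτ1 : 1 < τ := by
    have : (1:ℝ) < 1 + t ^ 2 := by nlinarith
    rw [hτdef]
    exact (Real.lt_sqrt (by norm_num)).mpr (by nlinarith)
  have hτ0 : 0 < τ := lt_trans one_pos hτ1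
  set H : ℝ → ℝ := fun s => g (s / τ) - g s with hHdef
  set H' : ℝ → ℝ := fun s => g' (s / τ) * (1 / τ) - g' s with hH'def
  clear_value H H'
  rw [show g (a / τ) - g a = H a by rw [hHdef], show g (c / τ) - g c = H c by rw [hHdef]]
  have hHderiv : ∀ s, 0 < s → HasDerivAt H (H' s) s := by
    intro s hs
    have h1 : HasDerivAt (fun s : ℝ => s / τ) (1 / τ) s := by
      simpa using (hasDerivAt_id s).div_const τ
    have h2 := (hg_deriv (s / τ) (div_pos hs hτ0)).comp s h1
    rw [hHdef, hH'def]
    exact h2.sub (hg_deriv s hs)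
  have hid : ∀ s, 0 < s → H' s * s = φ s - φ (s / τ) := by
    intro s hs
    have e1 := hφ s
    have e2 := hφ (s / τ)
    rw [hH'def, e1, e2]
    field_simp
    ring
  have hkey : ∀ s ∈ Set.Icc a c, min (H a) (H c) ≤ H s := by
    intro s hs
    by_cases hcase : ∀ u ∈ Set.Icc a s, 0 ≤ H' u
    · have hmono : MonotoneOn H (Set.Icc a s) := by
        apply monotoneOn_of_deriv_nonneg (convex_Icc a s)
        · intro u hu
          exact ((hHderiv u (lt_of_lt_of_le ha hu.1)).continuousAt).continuousWithinAt
        · intro u hu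
          rw [interior_Icc] at hu
          exact ((hHderiv u (lt_trans ha hu.1)).differentiableAt).differentiableWithinAt
        · intro u hu
          rw [interior_Icc] at hu
          have hu0 : 0 < u := lt_trans ha hu.1
          rw [(hHderiv u hu0).deriv]
          exact hcase u ⟨hu.1.le, hu.2.le⟩
      calc min (H a) (H c) ≤ H a := min_le_left _ _
        _ ≤ H s := hmono ⟨le_refl a, hs.1⟩ ⟨hs.1, le_refl s⟩ hs.1
    · push_neg at hcase
      obtain ⟨s₀, hs₀mem, hs₀neg⟩ := hcase
      have hs₀pos : 0 < s₀ := lt_of_lt_of_le ha hs₀mem.1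
      have hφs₀ : φ s₀ < φ (s₀ / τ) := by
        have h5 : H' s₀ * s₀ < 0 := mul_neg_of_neg_of_pos hs₀neg hs₀pos
        linarith [hid s₀ hs₀pos]
      have hσle : σM ≤ s₀ := by
        by_contra hlt
        push_neg at hlt
        have h1 : s₀ / τ ∈ Set.Ioc 0 σM :=
          ⟨div_pos hs₀pos hτ0, le_of_lt (lt_of_le_of_lt (div_le_self hs₀pos.le hτ1.le) hlt)⟩
        have h2 : s₀ ∈ Set.Ioc 0 σM := ⟨hs₀pos, hlt.le⟩
        have := hφ_mono h1 h2 (div_le_self hs₀pos.le hτ1.le)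
        linarith
      have hpers : ∀ u, s₀ ≤ u → φ u ≤ φ (u / τ) := by
        intro u hu
        have hupos : 0 < u := lt_of_lt_of_le hs₀pos hu
        by_cases hcase2 : σM ≤ u / τ
        · exact hφ_anti hcase2 (le_trans hcase2 (div_le_self hupos.le hτ1.le))
            (div_le_self hupos.le hτ1.le)
        · push_neg at hcase2
          have hdd : s₀ / τ ≤ u / τ := by gcongr
          have h3 : φ u ≤ φ s₀ := hφ_anti hσle (le_trans hσle hu) hu
          have h4 : φ (s₀ / τ) ≤ φ (u / τ) :=
            hφ_mono ⟨div_pos hs₀pos hτ0, le_trans hdd hcase2.le⟩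
              ⟨div_pos hupos hτ0, hcase2.le⟩ hdd
          linarith
      have hanti : AntitoneOn H (Set.Icc s₀ c) := by
        apply antitoneOn_of_deriv_nonpos (convex_Icc s₀ c)
        · intro u hu
          exact ((hHderiv u (lt_of_lt_of_le hs₀pos hu.1)).continuousAt).continuousWithinAt
        · intro u hu
          rw [interior_Icc] at hu
          exact ((hHderiv u (lt_trans hs₀pos hu.1)).differentiableAt).differentiableWithinAt
        · intro u hu
          rw [interior_Icc] at hu
          have hu0 : 0 < u := lt_trans hs₀pos hu.1
          rw [(hHderiv u hu0).deriv]
          have h6 := hpers u hu.1.le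
          have h5 : H' u * u ≤ 0 := by rw [hid u hu0]; linarith
          by_contra hc
          push_neg at hc
          nlinarith [mul_pos hc hu0]
      have hsc : H c ≤ H s :=
        hanti ⟨hs₀mem.2, hs.2⟩ ⟨le_trans hs₀mem.2 hs.2, le_refl c⟩ hs.2
      exact le_trans (min_le_right _ _) hsc
  have hbdd : BddBelow (H '' Set.Icc a c) := by
    refine ⟨min (H a) (H c), ?_⟩
    rintro y ⟨x, hx, rfl⟩
    exact hkey x hx
  have hmema : H a ∈ H '' Set.Icc a c := ⟨a, ⟨le_refl a, hac⟩, rfl⟩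
  have hmemc : H c ∈ H '' Set.Icc a c := ⟨c, ⟨hac, le_refl c⟩, rfl⟩
  apply le_antisymm
  · rcases min_cases (H a) (H c) with ⟨h, _⟩ | ⟨h, _⟩ <;> rw [h]
    · exact csInf_le hbdd hmema
    · exact csInf_le hbdd hmemc
  · refine le_csInf ⟨H a, hmema⟩ ?_
    rintro y ⟨x, hx, rfl⟩
    exact hkey x hx
end

section
/- Let ρ₁ and ρ₂ satisfy (A3) with associated functions g₁ and g₂, let 0 < ε < b < 1, and define σ_{b,ε} = g₁⁻¹((b−ε)/(1−ε)) and γ_{b,ε} = g₁⁻¹(b/(1−ε)). Suppose g₂ satisfies (A4) and that g₂(γ_{b,ε}) + ε/(1−ε) < 1, and set ℓ(ε) = [ (σ_{b,ε}/g₂⁻¹(g₂(σ_{b,ε}) + ε/(1−ε)))² − 1 ]^{1/2} and u(ε) = [ (γ_{b,ε}/g₂⁻¹(g₂(γ_{b,ε}) + ε/(1−ε)))² − 1 ]^{1/2}. Then for every H ∈ V_ε under the Gaussian model, every s ∈ [γ_{b,ε}, σ_{b,ε}], and every (α, θ) minimizing (α', θ') ↦ ∫ ρ₂((y − α' − x'θ')/s)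 dH(y,x) over ℝ × ℝ^p, one has ‖θ‖ ≤ max{ℓ(ε), u(ε)}. -/
open MeasureTheory ProbabilityTheory Filter Set
open scoped NNReal ENNReal

/-!
Write `T = √(1 + ‖θ‖²)`. Under the Gaussian model the residual `y - α - xᵀθ` is `N(-α, T²)`, so
by Anderson's inequality its expected `ρ₂`-loss at scale `s` is at least `g₂ (s / T)`, while the
fit `(0, 0)` has loss `g₂ s`. The contamination moves either loss by at most `ε`, so minimality
gives `g₂ (s / T) ≤ g₂ s + ε / (1 - ε)`. For `M = max (σ / sℓ) (γ / su)` the derivative of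
`x ↦ g₂ (x / M) - g₂ x` has the sign of `φ₂ x - φ₂ (x / M)`, which by unimodality of `φ₂` changes
sign at most once, from `+` to `-`. So on `[γ, σ]` this function is smallest at an endpoint, where
it is at least `ε / (1 - ε)` by the choice of `sℓ` and `su`. Hence `g₂ (s / T) ≤ g₂ (s / M)`,
i.e. `T ≤ M`.
-/

namespace ProbabilityTheory

variable {v : ℝ≥0}

open Complex in
lemma map_sub_sum_mul_gaussianReal_prod_pi {ι : Type*} [Fintype ι] (θ : ι → ℝ) :
    ((gaussianReal 0 1).prod (Measure.pi fun _ : ι => gaussianReal 0 1)).map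
        (fun yx => yx.1 - ∑ i, θ i * yx.2 i)
      = gaussianReal 0 (1 + ∑ i, θ i ^ 2).toNNReal := by
  have hmeas : Measurable fun yx : ℝ × (ι → ℝ) => yx.1 - ∑ i, θ i * yx.2 i := by fun_prop
  refine Measure.ext_of_charFun (funext fun t => ?_)
  rw [charFun_apply_real, integral_map hmeas.aemeasurable (by fun_prop), charFun_gaussianReal]
  have hsplit : ∀ yx : ℝ × (ι → ℝ), exp (t * (yx.1 - ∑ i, θ i * yx.2 i : ℝ) * I)
      = exp (t * yx.1 * I) * ∏ i, exp ((-(t * θ i) : ℝ) * yx.2 i * I) := by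
    intro yx
    rw [← exp_sum, ← exp_add]
    congr 1
    push_cast
    rw [mul_sub, sub_mul, Finset.mul_sum, Finset.sum_mul, sub_eq_add_neg,
      ← Finset.sum_neg_distrib]
    exact congrArg (_ + ·) (Finset.sum_congr rfl fun i _ => by ring)
  simp_rw [hsplit]
  rw [integral_prod_mul (fun y : ℝ => exp (t * y * I))
      (fun x : ι → ℝ => ∏ i, exp ((-(t * θ i) : ℝ) * x i * I)),
    integral_fintype_prod_eq_prod (fun i (x : ℝ) => exp ((-(t * θ i) : ℝ) * x * I))]
  simp_rw [← charFun_apply_real, charFun_gaussianReal]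
  rw [← exp_sum, ← exp_add, Real.coe_toNNReal _ (by positivity)]
  congr 1
  push_cast
  have hterm : ∀ i, -(t * θ i : ℂ) * 0 * I - 1 * (-(t * θ i : ℂ)) ^ 2 / 2
      = -(t ^ 2 / 2) * (θ i : ℂ) ^ 2 := fun i => by ring
  simp only [hterm, ← Finset.mul_sum]
  ring

lemma integral_comp_sub_sum_mul_gaussianReal_prod_pi {ι : Type*} [Fintype ι] (θ : ι → ℝ)
    {f : ℝ → ℝ} (hf : Measurable f) :
    ∫ yx, f (yx.1 - ∑ i, θ i * yx.2 i)
        ∂((gaussianReal 0 1).prod (Measure.pi fun _ : ι => gaussianReal 0 1))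
      = ∫ z, f (√(1 + ∑ i, θ i ^ 2) * z) ∂gaussianReal 0 1 := by
  rw [← integral_map (φ := fun yx : ℝ × (ι → ℝ) => yx.1 - ∑ i, θ i * yx.2 i) (by fun_prop)
      hf.aestronglyMeasurable, map_sub_sum_mul_gaussianReal_prod_pi,
    ← integral_map (measurable_const_mul _).aemeasurable hf.aestronglyMeasurable,
    gaussianReal_map_const_mul, mul_zero, mul_one]
  congr
  ext
  simp only [NNReal.coe_mk, Real.coe_toNNReal _ (by positivity : 0 ≤ 1 + ∑ i, θ i ^ 2)]
  exact (Real.sq_sqrt (by positivity)).symm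

lemma gaussianPDFReal_le_of_abs_le {x y : ℝ} (h : |y| ≤ |x|) :
    gaussianPDFReal 0 v x ≤ gaussianPDFReal 0 v y := by
  simp only [gaussianPDFReal_def, sub_zero]
  refine mul_le_mul_of_nonneg_left (Real.exp_le_exp.2 ?_) (by positivity)
  rw [neg_div, neg_div, neg_le_neg_iff]
  exact div_le_div_of_nonneg_right (sq_le_sq.2 h) (by positivity)

lemma gaussianReal_Icc_le_Icc_neg (hv : v ≠ 0) {a : ℝ} (ha : 0 ≤ a) (m : ℝ) :
    gaussianReal 0 v (Icc (m - a) (m + a)) ≤ gaussianReal 0 v (Icc (-a) a) := by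
  set φ := gaussianPDFReal 0 v
  have hφ : Continuous φ := by simp only [φ, gaussianPDFReal_def]; fun_prop
  set F : ℝ → ℝ := fun x => ∫ t in (0 : ℝ)..x, φ t
  have hF : ∀ c d, c ≤ d → gaussianReal 0 v (Icc c d) = ENNReal.ofReal (F d - F c) := by
    intro c d hcd
    rw [gaussianReal_apply_eq_integral 0 hv, integral_Icc_eq_integral_Ioc,
      ← intervalIntegral.integral_of_le hcd,
      intervalIntegral.integral_interval_sub_left (hφ.intervalIntegrable _ _)
        (hφ.intervalIntegrable _ _)]
  have hanti : AntitoneOn (fun m => F (m + a) - F (m - a)) (Ici 0) := by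
    have hderiv : ∀ x, HasDerivAt (fun m => F (m + a) - F (m - a)) (φ (x + a) - φ (x - a)) x :=
      fun x => ((hφ.integral_hasStrictDerivAt 0 (x + a)).hasDerivAt.comp_add_const x a).sub
        ((hφ.integral_hasStrictDerivAt 0 (x - a)).hasDerivAt.comp_sub_const x a)
    refine antitoneOn_of_hasDerivWithinAt_nonpos (convex_Ici 0)
      (fun x _ => (hderiv x).continuousAt.continuousWithinAt)
      (fun x _ => (hderiv x).hasDerivWithinAt) fun x hx => ?_
    rw [interior_Ici, mem_Ioi] at hx
    refine sub_nonpos.2 (gaussianPDFReal_le_of_abs_le ?_)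
    rw [abs_of_pos (by linarith : 0 < x + a), abs_le]
    constructor <;> linarith
  have hnonneg : ∀ m, 0 ≤ m →
      gaussianReal 0 v (Icc (m - a) (m + a)) ≤ gaussianReal 0 v (Icc (-a) a) := by
    intro m hm
    rw [hF _ _ (by linarith), hF _ _ (by linarith)]
    have := hanti self_mem_Ici hm hm
    simp only [zero_add, zero_sub] at this
    exact ENNReal.ofReal_le_ofReal this
  rcases le_or_gt 0 m with hm | hm
  · exact hnonneg m hm
  · have hsymm : gaussianReal 0 v (Icc (m - a) (m + a))
        = gaussianReal 0 v (Icc (-m - a) (-m + a)) := by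
      conv_lhs => rw [← neg_zero, ← gaussianReal_map_neg]
      rw [Measure.map_apply measurable_neg measurableSet_Icc]
      congr 1
      ext x
      simp only [mem_preimage, mem_Icc]
      constructor <;> rintro ⟨h₁, h₂⟩ <;> constructor <;> linarith
    rw [hsymm]
    exact hnonneg (-m) (by linarith)

lemma gaussianReal_preimage_add_le (hv : v ≠ 0) {C : Set ℝ}
    (hC : ∀ u ∈ C, ∀ u', |u'| ≤ |u| → u' ∈ C) (m : ℝ) :
    gaussianReal 0 v ((· + m) ⁻¹' C) ≤ gaussianReal 0 v C := by
  rcases eq_empty_or_nonempty C with rfl | ⟨u₀, hu₀⟩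
  · simp
  by_cases hbdd : BddAbove (abs '' C)
  · have hmem : |u₀| ∈ abs '' C := mem_image_of_mem _ hu₀
    set a := sSup (abs '' C)
    have hsub : C ⊆ Icc (-a) a := fun u hu => abs_le.1 (le_csSup hbdd (mem_image_of_mem _ hu))
    have hsup : Ioo (-a) a ⊆ C := by
      intro u hu
      obtain ⟨_, ⟨w, hw, rfl⟩, hlt⟩ := exists_lt_of_lt_csSup ⟨_, hmem⟩ (abs_lt.2 hu)
      exact hC w hw u hlt.le
    have := nullSingletonClass_gaussianReal (μ := 0) hv
    calc gaussianReal 0 v ((· + m) ⁻¹' C)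
        ≤ gaussianReal 0 v (Icc (-m - a) (-m + a)) := by
          refine measure_mono fun w hw => ?_
          have := hsub hw
          simp only [mem_Icc] at this ⊢
          constructor <;> linarith [this.1, this.2]
      _ ≤ gaussianReal 0 v (Icc (-a) a) :=
          gaussianReal_Icc_le_Icc_neg hv ((abs_nonneg _).trans (le_csSup hbdd hmem)) (-m)
      _ = gaussianReal 0 v (Ioo (-a) a) := (measure_congr Ioo_ae_eq_Icc).symm
      _ ≤ gaussianReal 0 v C := measure_mono hsup
  · have : C = univ := eq_univ_of_forall fun u => by
      obtain ⟨_, ⟨w, hw, rfl⟩, hlt⟩ := not_bddAbove_iff.1 hbdd |u|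
      exact hC w hw u hlt.le
    simp [this]

/-- Anderson's inequality in dimension one. -/
theorem integral_le_integral_comp_add_gaussianReal (hv : v ≠ 0) {ρ : ℝ → ℝ} (hρ : Measurable ρ)
    (heven : ∀ u, ρ (-u) = ρ u) (hmono : MonotoneOn ρ (Ici 0)) (hnonneg : 0 ≤ ρ) {m : ℝ}
    (hint : Integrable (fun z => ρ (z + m)) (gaussianReal 0 v)) :
    ∫ z, ρ z ∂gaussianReal 0 v ≤ ∫ z, ρ (z + m) ∂gaussianReal 0 v := by
  have hρm : Measurable fun z => ρ (z + m) := hρ.comp (measurable_add_const m)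
  have habs : ∀ u u', |u'| ≤ |u| → ρ u' ≤ ρ u := by
    have : ∀ u, ρ |u| = ρ u := fun u => by
      rcases abs_choice u with h | h <;> rw [h]
      exact heven u
    intro u u' h
    rw [← this u, ← this u']
    exact hmono (mem_Ici.2 (abs_nonneg _)) (mem_Ici.2 (abs_nonneg _)) h
  rw [integral_eq_lintegral_of_nonneg_ae (ae_of_all _ hnonneg) hρ.aestronglyMeasurable,
    integral_eq_lintegral_of_nonneg_ae (ae_of_all _ fun z => hnonneg (z + m))
      hρm.aestronglyMeasurable]
  refine ENNReal.toReal_mono hint.lintegral_lt_top.ne ?_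
  rw [lintegral_eq_lintegral_meas_lt _ (ae_of_all _ hnonneg) hρ.aemeasurable,
    lintegral_eq_lintegral_meas_lt _ (ae_of_all _ fun z => hnonneg (z + m)) hρm.aemeasurable]
  refine lintegral_mono fun t => ?_
  have hC : MeasurableSet {u | ρ u ≤ t} := measurableSet_le hρ measurable_const
  have hCm : MeasurableSet {z | ρ (z + m) ≤ t} := measurableSet_le hρm measurable_const
  simp only [← not_le]
  rw [← compl_ofPred, ← compl_ofPred, prob_compl_eq_one_sub hC, prob_compl_eq_one_sub hCm]
  exact tsub_le_tsub_left (gaussianReal_preimage_add_le hv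
    (fun u hu u' h => (habs u u' h).trans hu) m) 1

end ProbabilityTheory

lemma integral_comp_div_le_integral_residual {ι : Type*} [Fintype ι] {ρ : ℝ → ℝ}
    (hρ : Measurable ρ) (heven : ∀ u, ρ (-u) = ρ u) (hmono : MonotoneOn ρ (Ici 0))
    (hbdd : ∀ u, 0 ≤ ρ u ∧ ρ u ≤ 1) {s : ℝ} (hs : 0 < s) (α : ℝ) (θ : ι → ℝ) :
    ∫ z, ρ (z / (s / √(1 + ∑ i, θ i ^ 2))) ∂gaussianReal 0 1
      ≤ ∫ yx, ρ ((yx.1 - α - ∑ i, θ i * yx.2 i) / s)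
          ∂((gaussianReal 0 1).prod (Measure.pi fun _ : ι => gaussianReal 0 1)) := by
  have hres := integral_comp_sub_sum_mul_gaussianReal_prod_pi θ (f := fun w => ρ ((w - α) / s))
    (hρ.comp ((measurable_id.sub_const α).div_const s))
  simp only [sub_right_comm _ α] at hres ⊢
  rw [hres]
  have hT : 0 < √(1 + ∑ i, θ i ^ 2) := Real.sqrt_pos.2 (by positivity)
  generalize √(1 + ∑ i, θ i ^ 2) = T at hT ⊢
  have hρT : Measurable fun w => ρ (T * w / s) := hρ.comp ((measurable_const_mul T).div_const s)
  convert integral_le_integral_comp_add_gaussianReal one_ne_zero hρT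
    (fun w => by rw [mul_neg, neg_div, heven]) (fun a ha b hb hab => ?_)
    (fun w => (hbdd _).1) (m := -α / T) ?_ using 3 with z z
  · rw [div_div_eq_mul_div, mul_comm]
  · rw [mul_add, mul_div_cancel₀ _ hT.ne', sub_eq_add_neg]
  · exact hmono (div_nonneg (mul_nonneg hT.le ha) hs.le) (div_nonneg (mul_nonneg hT.le hb) hs.le)
      (by gcongr)
  · exact Integrable.of_bound (hρT.comp (measurable_add_const _)).aestronglyMeasurable 1
      (ae_of_all _ fun z => by
        rw [Real.norm_of_nonneg (hbdd _).1]; exact (hbdd _).2)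

lemma integral_le_integral_add_of_contamination {X : Type*} [MeasurableSpace X]
    {μ ν : Measure X} [IsFiniteMeasure μ] [IsProbabilityMeasure ν] {ε : ℝ} (hε : 0 ≤ ε)
    (hε1 : ε < 1) {f g : X → ℝ} (hf : Measurable f) (hg : Measurable g)
    (hf01 : ∀ x, 0 ≤ f x ∧ f x ≤ 1) (hg01 : ∀ x, 0 ≤ g x ∧ g x ≤ 1)
    (h : ∫ x, f x ∂(ENNReal.ofReal (1 - ε) • μ + ENNReal.ofReal ε • ν)
      ≤ ∫ x, g x ∂(ENNReal.ofReal (1 - ε) • μ + ENNReal.ofReal ε • ν)) :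
    ∫ x, f x ∂μ ≤ ∫ x, g x ∂μ + ε / (1 - ε) := by
  have hint : ∀ {k : X → ℝ} (κ : Measure X) [IsFiniteMeasure κ], Measurable k →
      (∀ x, 0 ≤ k x ∧ k x ≤ 1) → Integrable k κ := fun κ _ hk hk01 =>
    Integrable.of_bound hk.aestronglyMeasurable 1
      (ae_of_all _ fun x => by rw [Real.norm_of_nonneg (hk01 x).1]; exact (hk01 x).2)
  have hmix : ∀ {k : X → ℝ}, Measurable k → (∀ x, 0 ≤ k x ∧ k x ≤ 1) →
      ∫ x, k x ∂(ENNReal.ofReal (1 - ε) • μ + ENNReal.ofReal ε • ν)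
        = (1 - ε) * ∫ x, k x ∂μ + ε * ∫ x, k x ∂ν := fun hk hk01 => by
    rw [integral_add_measure ((hint μ hk hk01).smul_measure ENNReal.ofReal_ne_top)
        ((hint ν hk hk01).smul_measure ENNReal.ofReal_ne_top), integral_smul_measure,
      integral_smul_measure, ENNReal.toReal_ofReal (by linarith), ENNReal.toReal_ofReal hε,
      smul_eq_mul, smul_eq_mul]
  rw [hmix hf hf01, hmix hg hg01] at h
  have hfν : 0 ≤ ∫ x, f x ∂ν := integral_nonneg fun x => (hf01 x).1
  have hgν : ∫ x, g x ∂ν ≤ 1 := by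
    simpa using integral_mono (hint ν hg hg01) (integrable_const 1) fun x => (hg01 x).2
  rw [← sub_le_iff_le_add', le_div_iff₀ (by linarith)]
  nlinarith

lemma integral_comp_div_le_add_of_contaminated {ι : Type*} [Fintype ι] {ρ : ℝ → ℝ}
    (hρ : Measurable ρ) (heven : ∀ u, ρ (-u) = ρ u) (hmono : MonotoneOn ρ (Ici 0))
    (hbdd : ∀ u, 0 ≤ ρ u ∧ ρ u ≤ 1) {ν : Measure (ℝ × (ι → ℝ))} [IsProbabilityMeasure ν]
    {ε : ℝ} (hε : 0 ≤ ε) (hε1 : ε < 1) {s : ℝ} (hs : 0 < s) (α : ℝ) (θ : ι → ℝ)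
    (hmin : ∫ yx, ρ ((yx.1 - α - ∑ i, θ i * yx.2 i) / s)
        ∂(ENNReal.ofReal (1 - ε) • (gaussianReal 0 1).prod
          (Measure.pi fun _ : ι => gaussianReal 0 1) + ENNReal.ofReal ε • ν)
      ≤ ∫ yx, ρ (yx.1 / s) ∂(ENNReal.ofReal (1 - ε) • (gaussianReal 0 1).prod
          (Measure.pi fun _ : ι => gaussianReal 0 1) + ENNReal.ofReal ε • ν)) :
    ∫ z, ρ (z / (s / √(1 + ∑ i, θ i ^ 2))) ∂gaussianReal 0 1
      ≤ ∫ z, ρ (z / s) ∂gaussianReal 0 1 + ε / (1 - ε) := by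
  have hρs : Measurable fun w => ρ (w / s) := hρ.comp (measurable_id.div_const s)
  have hfit₀ := integral_comp_sub_sum_mul_gaussianReal_prod_pi (0 : ι → ℝ) hρs
  simp only [Pi.zero_apply, zero_mul, Finset.sum_const_zero, sub_zero, ne_eq,
    OfNat.ofNat_ne_zero, not_false_eq_true, zero_pow, add_zero, Real.sqrt_one, one_mul] at hfit₀
  rw [← hfit₀]
  exact (integral_comp_div_le_integral_residual hρ heven hmono hbdd hs α θ).trans
    (integral_le_integral_add_of_contamination hε hε1 (hρs.comp (by fun_prop))
      (hρs.comp measurable_fst) (fun _ => hbdd _) (fun _ => hbdd _) hmin)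

lemma StrictAntiOn.of_hasDerivAt_of_neg_mul_pos {g g' φ : ℝ → ℝ}
    (hg : ∀ x ∈ Ioi 0, HasDerivAt g (g' x) x) (hφ : ∀ x, φ x = -x * g' x)
    (hpos : ∀ x ∈ Ioi (0 : ℝ), 0 < φ x) : StrictAntiOn g (Ioi 0) := by
  refine strictAntiOn_of_hasDerivWithinAt_neg (convex_Ioi 0)
    (fun x hx => (hg x hx).continuousAt.continuousWithinAt) (f' := g')
    (fun x hx => ?_) fun x hx => ?_ <;> rw [interior_Ioi] at hx
  · exact (hg x hx).hasDerivWithinAt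
  · have := hpos x hx
    rw [hφ] at this
    nlinarith [mem_Ioi.1 hx]

lemma MonotoneOn.le_comp_div_of_lt_comp_div {φ : ℝ → ℝ} {c M x y : ℝ}
    (hmono : MonotoneOn φ (Ioc 0 c)) (hanti : AntitoneOn φ (Ici c)) (hM : 1 ≤ M)
    (hx : 0 < x) (hxy : x < y) (h : φ x < φ (x / M)) : φ y ≤ φ (y / M) := by
  have hM0 : 0 < M := by linarith
  have hcx : c < x := by
    by_contra! hxc
    have hxM : x / M ≤ x := div_le_self hx.le hM
    exact (hmono ⟨by positivity, hxM.trans hxc⟩ ⟨hx, hxc⟩ hxM).not_gt h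
  rcases le_or_gt c (y / M) with hcy | hyc
  · exact hanti hcy (hcy.trans (div_le_self (by linarith) hM)) (div_le_self (by linarith) hM)
  · have hxyM : x / M ≤ y / M := (div_le_div_iff_of_pos_right hM0).2 hxy.le
    calc φ y ≤ φ x := hanti hcx.le (hcx.trans hxy).le hxy.le
      _ ≤ φ (x / M) := h.le
      _ ≤ φ (y / M) := hmono ⟨div_pos hx hM0, hxyM.trans hyc.le⟩
          ⟨div_pos (hx.trans hxy) hM0, hyc.le⟩ hxyM

lemma min_le_of_hasDerivAt_of_neg_imp_nonpos {f f' : ℝ → ℝ} {a b s : ℝ}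
    (hf : ∀ x ∈ Icc a b, HasDerivAt f (f' x) x)
    (hsign : ∀ x ∈ Ioo a b, ∀ y ∈ Ioo a b, x < y → f' x < 0 → f' y ≤ 0) (hs : s ∈ Icc a b) :
    min (f a) (f b) ≤ f s := by
  by_contra! h
  obtain ⟨hsa, hsb⟩ := lt_min_iff.1 h
  have has : a < s := hs.1.lt_of_ne (by rintro rfl; exact hsa.false)
  have hsb' : s < b := hs.2.lt_of_ne (by rintro rfl; exact hsb.false)
  have hcont : ∀ {c d}, c ∈ Icc a b → d ∈ Icc a b → ContinuousOn f (Icc c d) :=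
    fun hc hd x hx => (hf x ⟨hc.1.trans hx.1, hx.2.trans hd.2⟩).continuousAt.continuousWithinAt
  have hderiv : ∀ {c d}, c ∈ Icc a b → d ∈ Icc a b → ∀ x ∈ Ioo c d, HasDerivAt f (f' x) x :=
    fun hc hd x hx => hf x ⟨hc.1.trans hx.1.le, hx.2.le.trans hd.2⟩
  have ha : a ∈ Icc a b := ⟨le_rfl, hs.1.trans hs.2⟩
  have hb : b ∈ Icc a b := ⟨hs.1.trans hs.2, le_rfl⟩
  obtain ⟨x, hx, hx'⟩ := exists_hasDerivAt_eq_slope f f' has (hcont ha hs) (hderiv ha hs)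
  obtain ⟨y, hy, hy'⟩ := exists_hasDerivAt_eq_slope f f' hsb' (hcont hs hb) (hderiv hs hb)
  have hneg : f' x < 0 := by rw [hx']; exact div_neg_of_neg_of_pos (by linarith) (by linarith)
  have hpos : 0 < f' y := by rw [hy']; exact div_pos (by linarith) (by linarith)
  exact (hsign x ⟨hx.1, hx.2.trans hsb'⟩ y ⟨has.trans hy.1, hy.2⟩ (hx.2.trans hy.1) hneg).not_gt
    hpos

lemma min_le_sub_comp_div {g g' φ : ℝ → ℝ} {c M a b s : ℝ}
    (hg : ∀ x ∈ Ioi 0, HasDerivAt g (g' x) x) (hφ : ∀ x, φ x = -x * g' x)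
    (hmono : MonotoneOn φ (Ioc 0 c)) (hanti : AntitoneOn φ (Ici c)) (hM : 1 ≤ M) (ha : 0 < a)
    (hs : s ∈ Icc a b) :
    min (g (a / M) - g a) (g (b / M) - g b) ≤ g (s / M) - g s := by
  have hM0 : 0 < M := by linarith
  have hderiv : ∀ x ∈ Ioi (0 : ℝ), HasDerivAt (fun x => g (x / M) - g x)
      ((φ x - φ (x / M)) / x) x := by
    intro x hx
    have hx0 : x ≠ 0 := ne_of_gt hx
    have hxM : 0 < x / M := div_pos hx hM0
    refine (((hg (x / M) hxM).comp x ((hasDerivAt_id x).div_const M)).sub (hg x hx)).congr_deriv ?_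
    rw [hφ, hφ]
    field_simp
    ring
  refine min_le_of_hasDerivAt_of_neg_imp_nonpos (fun x hx => hderiv x (ha.trans_le hx.1))
    (fun x hx y hy hxy h => ?_) hs
  have hx0 : 0 < x := ha.trans hx.1
  have hy0 : 0 < y := hx0.trans hxy
  rw [div_neg_iff] at h
  refine div_nonpos_of_nonpos_of_nonneg ?_ hy0.le
  rw [sub_nonpos]
  refine hmono.le_comp_div_of_lt_comp_div hanti hM hx0 hxy ?_
  rcases h with h | h
  · linarith [h.2]
  · linarith [h.1]

lemma add_le_comp_div_max {g g' φ : ℝ → ℝ} {c γ σ sℓ su s d : ℝ}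
    (hg : ∀ x ∈ Ioi 0, HasDerivAt g (g' x) x) (hφ : ∀ x, φ x = -x * g' x)
    (hg_anti : StrictAntiOn g (Ioi 0)) (hmono : MonotoneOn φ (Ioc 0 c))
    (hanti : AntitoneOn φ (Ici c)) (hγ : 0 < γ) (hsℓ_pos : 0 < sℓ) (hsu_pos : 0 < su)
    (hd : 0 ≤ d) (hsℓ : g sℓ = g σ + d) (hsu : g su = g γ + d) (hs : s ∈ Icc γ σ) :
    g s + d ≤ g (s / max (σ / sℓ) (γ / su)) := by
  set M := max (σ / sℓ) (γ / su)
  have hσ : 0 < σ := hγ.trans_le (hs.1.trans hs.2)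
  have hM : 1 ≤ M := le_max_of_le_left ((one_le_div hsℓ_pos).2
    ((hg_anti.le_iff_ge hσ hsℓ_pos).1 (by linarith)))
  have hend : ∀ {x y : ℝ}, 0 < x → 0 < y → x / y ≤ M → g y = g x + d →
      d ≤ g (x / M) - g x := by
    intro x y hx hy hxy hgy
    have : x / M ≤ y := by
      rw [div_le_iff₀ (by linarith)]; rwa [div_le_iff₀ hy, mul_comm] at hxy
    linarith [(hg_anti.le_iff_ge hy (div_pos hx (by linarith))).2 this]
  linarith [(le_min (hend hγ hsu_pos (le_max_right _ _) hsu)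
    (hend hσ hsℓ_pos (le_max_left _ _) hsℓ)).trans
    (min_le_sub_comp_div hg hφ hmono hanti hM hγ hs)]

theorem stmt5_general (p : ℕ) (ρ₂ : ℝ → ℝ)
    -- (A3) for ρ₂:
    (hρ₂_meas : Measurable ρ₂)
    (hρ₂_even : ∀ u, ρ₂ (-u) = ρ₂ u)
    (hρ₂_mono : MonotoneOn ρ₂ (Set.Ici 0))
    (hρ₂_bdd : ∀ u, 0 ≤ ρ₂ u ∧ ρ₂ u ≤ 1)
    (g₂ : ℝ → ℝ)
    (hg₂ : ∀ s, 0 < s → g₂ s = ∫ z, ρ₂ (z / s) ∂(gaussianReal 0 1))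
    (b ε : ℝ) (hε : 0 < ε) (hεb : ε < b) (hb : b < 1)
    -- σ_{b,ε} = g₁⁻¹((b−ε)/(1−ε)) and γ_{b,ε} = g₁⁻¹(b/(1−ε)):
    (σbε γbε : ℝ) (hσ_pos : 0 < σbε) (hγ_pos : 0 < γbε)
    -- Condition (A4) for g₂:
    (g₂' : ℝ → ℝ)
    (hg₂_deriv : ∀ s ∈ Set.Ioi (0 : ℝ), HasDerivAt g₂ (g₂' s) s)
    (φ₂ : ℝ → ℝ) (hφ₂ : ∀ s, φ₂ s = -s * g₂' s)
    (hφ₂_pos : ∀ s ∈ Set.Ioi (0 : ℝ), 0 < φ₂ s)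
    (σM : ℝ)
    (hφ₂_mono : MonotoneOn φ₂ (Set.Ioc 0 σM))
    (hφ₂_anti : AntitoneOn φ₂ (Set.Ici σM))
    -- sℓ = g₂⁻¹(g₂(σ_{b,ε}) + ε/(1−ε)) and su = g₂⁻¹(g₂(γ_{b,ε}) + ε/(1−ε)):
    (sℓ su : ℝ) (hsℓ_pos : 0 < sℓ) (hsu_pos : 0 < su)
    (hsℓ : g₂ sℓ = g₂ σbε + ε / (1 - ε))
    (hsu : g₂ su = g₂ γbε + ε / (1 - ε))
    (ℓ u : ℝ)
    (hℓ : ℓ = Real.sqrt ((σbε / sℓ) ^ 2 - 1))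
    (hu : u = Real.sqrt ((γbε / su) ^ 2 - 1))
    -- the contaminated distribution H ∈ V_ε:
    (Hstar : Measure (ℝ × (Fin p → ℝ))) (hHstar : IsProbabilityMeasure Hstar)
    (H : Measure (ℝ × (Fin p → ℝ)))
    (hH : H = ENNReal.ofReal (1 - ε) •
        ((gaussianReal 0 1).prod (Measure.pi fun _ : Fin p => gaussianReal 0 1)) +
        ENNReal.ofReal ε • Hstar)
    (s : ℝ) (hs : s ∈ Set.Icc γbε σbε)
    (α : ℝ) (θ : Fin p → ℝ)
    (hmin : ∀ α' : ℝ, ∀ θ' : Fin p → ℝ,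
        ∫ yx, ρ₂ ((yx.1 - α - ∑ i, θ i * yx.2 i) / s) ∂H ≤
        ∫ yx, ρ₂ ((yx.1 - α' - ∑ i, θ' i * yx.2 i) / s) ∂H) :
    Real.sqrt (∑ i, θ i ^ 2) ≤ max ℓ u := by
  have hε1 : ε < 1 := hεb.trans hb
  have hs0 : 0 < s := hγ_pos.trans_le hs.1
  have hg₂_anti := StrictAntiOn.of_hasDerivAt_of_neg_mul_pos hg₂_deriv hφ₂ hφ₂_pos
  set T := √(1 + ∑ i, θ i ^ 2)
  set M := max (σbε / sℓ) (γbε / su)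
  have hT : 0 < T := Real.sqrt_pos.2 (by positivity)
  have hM : 0 < M := (div_pos hσ_pos hsℓ_pos).trans_le (le_max_left _ _)
  have hfit : g₂ (s / T) ≤ g₂ (s / M) := by
    rw [hg₂ _ (div_pos hs0 hT)]
    refine (integral_comp_div_le_add_of_contaminated hρ₂_meas hρ₂_even hρ₂_mono hρ₂_bdd
      hε.le hε1 hs0 α θ (by simpa [hH] using hmin 0 0)).trans ?_
    rw [← hg₂ s hs0]
    exact add_le_comp_div_max hg₂_deriv hφ₂ hg₂_anti hφ₂_mono hφ₂_anti hγ_pos hsℓ_pos hsu_pos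
      (div_pos hε (sub_pos.2 hε1)).le hsℓ hsu hs
  have hTM : T ≤ M := (div_le_div_iff_of_pos_left hs0 hM hT).1
    ((hg₂_anti.le_iff_ge (div_pos hs0 hT) (div_pos hs0 hM)).1 hfit)
  have hθ : ∑ i, θ i ^ 2 = T ^ 2 - 1 := by rw [Real.sq_sqrt (by positivity)]; ring
  rcases le_max_iff.1 hTM with h | h
  · exact le_max_of_le_left (hℓ ▸ Real.sqrt_le_sqrt (by rw [hθ]; nlinarith))
  · exact le_max_of_le_right (hu ▸ Real.sqrt_le_sqrt (by rw [hθ]; nlinarith))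

/-- Under the Gaussian model, any minimizer (α, θ) of the MM-criterion at a
scale s ∈ [γ_{b,ε}, σ_{b,ε}] over a contaminated distribution H ∈ V_ε satisfies
‖θ‖ ≤ max{ℓ(ε), u(ε)}. -/
theorem stmt5 (p : ℕ) (hp : 1 ≤ p) (ρ₁ ρ₂ : ℝ → ℝ)
    -- (A3) for ρ₁:
    (hρ₁_meas : Measurable ρ₁)
    (hρ₁_even : ∀ u, ρ₁ (-u) = ρ₁ u)
    (hρ₁_mono : MonotoneOn ρ₁ (Set.Ici 0))
    (hρ₁_zero : ρ₁ 0 = 0)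
    (hρ₁_bdd : ∀ u, 0 ≤ ρ₁ u ∧ ρ₁ u ≤ 1)
    (hρ₁_lim : Tendsto ρ₁ atTop (nhds 1))
    -- (A3) for ρ₂:
    (hρ₂_meas : Measurable ρ₂)
    (hρ₂_even : ∀ u, ρ₂ (-u) = ρ₂ u)
    (hρ₂_mono : MonotoneOn ρ₂ (Set.Ici 0))
    (hρ₂_zero : ρ₂ 0 = 0)
    (hρ₂_bdd : ∀ u, 0 ≤ ρ₂ u ∧ ρ₂ u ≤ 1)
    (hρ₂_lim : Tendsto ρ₂ atTop (nhds 1))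
    (g₁ g₂ : ℝ → ℝ)
    (hg₁ : ∀ s, 0 < s → g₁ s = ∫ z, ρ₁ (z / s) ∂(gaussianReal 0 1))
    (hg₂ : ∀ s, 0 < s → g₂ s = ∫ z, ρ₂ (z / s) ∂(gaussianReal 0 1))
    (b ε : ℝ) (hε : 0 < ε) (hεb : ε < b) (hb : b < 1)
    -- σ_{b,ε} = g₁⁻¹((b−ε)/(1−ε)) and γ_{b,ε} = g₁⁻¹(b/(1−ε)):
    (σbε γbε : ℝ) (hσ_pos : 0 < σbε) (hγ_pos : 0 < γbε)
    (hσ : g₁ σbε = (b - ε) / (1 - ε)) (hγ : g₁ γbε = b / (1 - ε))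
    -- Condition (A4) for g₂:
    (g₂' : ℝ → ℝ)
    (hg₂_deriv : ∀ s ∈ Set.Ioi (0 : ℝ), HasDerivAt g₂ (g₂' s) s)
    (hg₂'_cont : ContinuousOn g₂' (Set.Ioi 0))
    (φ₂ : ℝ → ℝ) (hφ₂ : ∀ s, φ₂ s = -s * g₂' s)
    (hφ₂_pos : ∀ s ∈ Set.Ioi (0 : ℝ), 0 < φ₂ s)
    (σM : ℝ) (hσM : 0 < σM)
    (hφ₂_mono : MonotoneOn φ₂ (Set.Ioc 0 σM))
    (hφ₂_anti : AntitoneOn φ₂ (Set.Ici σM))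
    -- the value g₂(γ_{b,ε}) + ε/(1−ε) lies below 1:
    (hlt : g₂ γbε + ε / (1 - ε) < 1)
    -- sℓ = g₂⁻¹(g₂(σ_{b,ε}) + ε/(1−ε)) and su = g₂⁻¹(g₂(γ_{b,ε}) + ε/(1−ε)):
    (sℓ su : ℝ) (hsℓ_pos : 0 < sℓ) (hsu_pos : 0 < su)
    (hsℓ : g₂ sℓ = g₂ σbε + ε / (1 - ε))
    (hsu : g₂ su = g₂ γbε + ε / (1 - ε))
    (ℓ u : ℝ)
    (hℓ : ℓ = Real.sqrt ((σbε / sℓ) ^ 2 - 1))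
    (hu : u = Real.sqrt ((γbε / su) ^ 2 - 1))
    -- the contaminated distribution H ∈ V_ε:
    (Hstar : Measure (ℝ × (Fin p → ℝ))) (hHstar : IsProbabilityMeasure Hstar)
    (H : Measure (ℝ × (Fin p → ℝ)))
    (hH : H = ENNReal.ofReal (1 - ε) •
        ((gaussianReal 0 1).prod (Measure.pi fun _ : Fin p => gaussianReal 0 1)) +
        ENNReal.ofReal ε • Hstar)
    (s : ℝ) (hs : s ∈ Set.Icc γbε σbε)
    (α : ℝ) (θ : Fin p → ℝ)
    (hmin : ∀ α' : ℝ, ∀ θ' : Fin p → ℝ,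
        ∫ yx, ρ₂ ((yx.1 - α - ∑ i, θ i * yx.2 i) / s) ∂H ≤
        ∫ yx, ρ₂ ((yx.1 - α' - ∑ i, θ' i * yx.2 i) / s) ∂H) :
    Real.sqrt (∑ i, θ i ^ 2) ≤ max ℓ u :=
  stmt5_general p ρ₂ hρ₂_meas hρ₂_even hρ₂_mono hρ₂_bdd g₂ hg₂ b ε hε hεb hb σbε γbε hσ_pos hγ_pos
    g₂' hg₂_deriv φ₂ hφ₂ hφ₂_pos σM hφ₂_mono hφ₂_anti sℓ su hsℓ_pos hsu_pos hsℓ hsu ℓ u hℓ hu Hstar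
    hHstar H hH s hs α θ hmin
end

section
/- Let ρ satisfy (A3) and suppose g satisfies (A4), and let 0 < b < 1. If 0 < c ≤ 1/K, then B_CM(ε) = B_S(ε) for every ε ∈ (0, b). -/
open MeasureTheory ProbabilityTheory Filter Set

/-!
Unimodality gives `φ ≤ K` on `(0, ∞)`, and `K > 0` is forced by `0 < c ≤ 1 / K`. Hence the
derivative `c (1 - ε) g'(s) + 1 / s = (1 - c (1 - ε) φ(s)) / s` of `A_{c,ε}` is nonnegative, so
`A_{c,ε}` is nondecreasing on `(0, ∞)` and both infima in `D_c(ε)` are attained at the left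
endpoints. The defining equations of `σ_{b,ε}` and `γ_{b,ε}` then give
`D_c(ε) = log (σ_{b,ε} / γ_{b,ε}) - c ε`, hence `exp (2 c ε + 2 D_c(ε)) = (σ_{b,ε} / γ_{b,ε})²`.
-/

theorem apply_le_apply_of_monotoneOn_Ioc_of_antitoneOn_Ici {φ : ℝ → ℝ} {σM s : ℝ}
    (hmono : MonotoneOn φ (Ioc 0 σM)) (hanti : AntitoneOn φ (Ici σM)) (hs : 0 < s) :
    φ s ≤ φ σM := by
  rcases le_or_gt s σM with h | h
  · exact hmono ⟨hs, h⟩ ⟨hs.trans_le h, le_rfl⟩ h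
  · exact hanti self_mem_Ici h.le h.le

theorem monotoneOn_mul_add_log {g g' : ℝ → ℝ} {a : ℝ}
    (hg : ∀ s ∈ Ioi (0 : ℝ), HasDerivAt g (g' s) s)
    (ha : ∀ s ∈ Ioi (0 : ℝ), a * (-s * g' s) ≤ 1) :
    MonotoneOn (fun s => a * g s + Real.log s) (Ioi 0) := by
  have hderiv : ∀ s ∈ Ioi (0 : ℝ),
      HasDerivAt (fun s => a * g s + Real.log s) (a * g' s + s⁻¹) s := fun s hs =>
    ((hg s hs).const_mul a).add (Real.hasDerivAt_log (ne_of_gt hs))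
  refine monotoneOn_of_hasDerivWithinAt_nonneg (convex_Ioi 0)
    (fun s hs => (hderiv s hs).continuousAt.continuousWithinAt)
    (fun s hs => by rw [interior_Ioi] at hs ⊢; exact (hderiv s hs).hasDerivWithinAt)
    (fun s hs => ?_)
  rw [interior_Ioi] at hs
  have hs0 : (0 : ℝ) < s := hs
  have hrewrite : a * g' s + s⁻¹ = (1 - a * (-s * g' s)) / s := by
    field_simp
    ring
  rw [hrewrite]
  exact div_nonneg (sub_nonneg.mpr (ha s hs)) hs0.le

theorem stmt9_general
    (g : ℝ → ℝ)
    -- Condition (A4):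
    (g' : ℝ → ℝ)
    (hg_deriv : ∀ s ∈ Set.Ioi (0 : ℝ), HasDerivAt g (g' s) s)
    (φ : ℝ → ℝ) (hφ : ∀ s, φ s = -s * g' s)
    (σM : ℝ)
    (hφ_mono : MonotoneOn φ (Set.Ioc 0 σM))
    (hφ_anti : AntitoneOn φ (Set.Ici σM))
    (K : ℝ) (hK : K = φ σM)
    (b : ℝ) (hb1 : b < 1)
    -- σ_{b,ε} and γ_{b,ε} as functions of ε:
    (σb γb : ℝ → ℝ)
    (hσb : ∀ ε ∈ Set.Ico (0 : ℝ) b, 0 < σb ε ∧ g (σb ε) = (b - ε) / (1 - ε))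
    (hγb : ∀ ε ∈ Set.Ico (0 : ℝ) b, 0 < γb ε ∧ g (γb ε) = b / (1 - ε))
    (c : ℝ) (hc0 : 0 < c) (hcK : c ≤ 1 / K)
    (A : ℝ → ℝ → ℝ) (hA : ∀ ε s, A ε s = c * (1 - ε) * g s + Real.log s)
    (D : ℝ → ℝ)
    (hD : ∀ ε, D ε = sInf (A ε '' Set.Ici (σb ε)) - sInf (A ε '' Set.Ici (γb ε)))
    (BS : ℝ → ℝ) (hBS : ∀ ε, BS ε = Real.sqrt ((σb ε / γb ε) ^ 2 - 1))
    (BCM : ℝ → ℝ)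
    (hBCM : ∀ ε, BCM ε = Real.sqrt (Real.exp (2 * c * ε + 2 * D ε) - 1)) :
    ∀ ε ∈ Set.Ioo (0 : ℝ) b, BCM ε = BS ε := by
  rintro ε ⟨hε0, hεb⟩
  have hε1 : ε < 1 := hεb.trans hb1
  obtain ⟨hσpos, hσg⟩ := hσb ε ⟨hε0.le, hεb⟩
  obtain ⟨hγpos, hγg⟩ := hγb ε ⟨hε0.le, hεb⟩
  have hcK_le_one : c * K ≤ 1 := by
    have hKpos : 0 < K := one_div_pos.mp (hc0.trans_le hcK)
    rwa [le_div_iff₀ hKpos] at hcK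
  have hbound : ∀ s ∈ Ioi (0 : ℝ), c * (1 - ε) * (-s * g' s) ≤ 1 := fun s hs => by
    have hφK : φ s ≤ K :=
      hK ▸ apply_le_apply_of_monotoneOn_Ioc_of_antitoneOn_Ici hφ_mono hφ_anti hs
    rw [← hφ]
    rcases le_total 0 (φ s) with h | h <;> nlinarith [mul_le_mul_of_nonneg_left hφK hc0.le]
  have hinf : ∀ x, 0 < x → sInf (A ε '' Ici x) = c * (1 - ε) * g x + Real.log x := by
    intro x hx
    rw [funext (hA ε)]
    exact (((monotoneOn_mul_add_log hg_deriv hbound).mono (Ici_subset_Ioi.mpr hx)).map_isLeast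
      isLeast_Ici).csInf_eq
  have hexponent : 2 * c * ε + 2 * D ε = 2 * Real.log (σb ε / γb ε) := by
    rw [hD, hinf _ hσpos, hinf _ hγpos, hσg, hγg, Real.log_div hσpos.ne' hγpos.ne']
    field_simp [(sub_pos.mpr hε1).ne']
    ring
  rw [hBCM, hBS, hexponent, ← Real.log_rpow (div_pos hσpos hγpos), Real.exp_log (by positivity)]
  norm_cast

/-- Theorem 6.1(i): Under (A3) and (A4), if 0 < c ≤ 1/K then
B_CM(ε) = B_S(ε) for every ε ∈ (0, b). -/
theorem stmt9 (ρ : ℝ → ℝ)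
    (hρ_meas : Measurable ρ)
    (hρ_even : ∀ u, ρ (-u) = ρ u)
    (hρ_mono : MonotoneOn ρ (Set.Ici 0))
    (hρ_zero : ρ 0 = 0)
    (hρ_bdd : ∀ u, 0 ≤ ρ u ∧ ρ u ≤ 1)
    (hρ_lim : Tendsto ρ atTop (nhds 1))
    (g : ℝ → ℝ)
    (hg : ∀ s, 0 < s → g s = ∫ z, ρ (z / s) ∂(gaussianReal 0 1))
    -- Condition (A4):
    (g' : ℝ → ℝ)
    (hg_deriv : ∀ s ∈ Set.Ioi (0 : ℝ), HasDerivAt g (g' s) s)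
    (hg'_cont : ContinuousOn g' (Set.Ioi 0))
    (φ : ℝ → ℝ) (hφ : ∀ s, φ s = -s * g' s)
    (hφ_pos : ∀ s ∈ Set.Ioi (0 : ℝ), 0 < φ s)
    (σM : ℝ) (hσM : 0 < σM)
    (hφ_mono : MonotoneOn φ (Set.Ioc 0 σM))
    (hφ_anti : AntitoneOn φ (Set.Ici σM))
    (K : ℝ) (hK : K = φ σM)
    (b : ℝ) (hb0 : 0 < b) (hb1 : b < 1)
    -- σ_{b,ε} and γ_{b,ε} as functions of ε:
    (σb γb : ℝ → ℝ)
    (hσb : ∀ ε ∈ Set.Ico (0 : ℝ) b, 0 < σb ε ∧ g (σb ε) = (b - ε) / (1 - ε))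
    (hγb : ∀ ε ∈ Set.Ico (0 : ℝ) b, 0 < γb ε ∧ g (γb ε) = b / (1 - ε))
    (c : ℝ) (hc0 : 0 < c) (hcK : c ≤ 1 / K)
    (A : ℝ → ℝ → ℝ) (hA : ∀ ε s, A ε s = c * (1 - ε) * g s + Real.log s)
    (D : ℝ → ℝ)
    (hD : ∀ ε, D ε = sInf (A ε '' Set.Ici (σb ε)) - sInf (A ε '' Set.Ici (γb ε)))
    (BS : ℝ → ℝ) (hBS : ∀ ε, BS ε = Real.sqrt ((σb ε / γb ε) ^ 2 - 1))
    (BCM : ℝ → ℝ)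
    (hBCM : ∀ ε, BCM ε = Real.sqrt (Real.exp (2 * c * ε + 2 * D ε) - 1)) :
    ∀ ε ∈ Set.Ioo (0 : ℝ) b, BCM ε = BS ε :=
  stmt9_general g g' hg_deriv φ hφ σM hφ_mono hφ_anti K hK b hb1 σb γb hσb hγb c hc0 hcK A hA D hD
    BS hBS BCM hBCM
end

section
/- Let ρ satisfy (A3) and suppose g satisfies (A4), and let 0 < b < 1. Then lim_{ε → 0⁺} c(ε) = 1/φ(σ_{b,0}), where c(ε) = ε⁻¹ log(σ_{b,ε}/γ_{b,ε}) and σ_{b,0} = g⁻¹(b). -/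
open MeasureTheory ProbabilityTheory Filter Set

lemma aux_tendsto_inv (g : ℝ → ℝ) (hg : StrictAntiOn g (Set.Ioi 0))
    (x0 : ℝ) (hx0 : 0 < x0) {l : Filter ℝ} (τ v : ℝ → ℝ)
    (hτ : ∀ᶠ ε in l, 0 < τ ε ∧ g (τ ε) = v ε)
    (hv : Tendsto v l (nhds (g x0))) : Tendsto τ l (nhds x0) := by
  rw [tendsto_order]
  constructor
  · intro a ha
    by_cases hA : 0 < a
    · have hlt : g x0 < g a := hg hA hx0 ha
      filter_upwards [hτ, hv.eventually_lt_const hlt] with ε ⟨hpos, heq⟩ h2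
      by_contra hcon
      push_neg at hcon
      rcases lt_or_eq_of_le hcon with h | h
      · have := hg hpos hA h
        rw [heq] at this; linarith
      · rw [h] at heq; rw [← heq] at h2; linarith
    · push_neg at hA
      filter_upwards [hτ] with ε ⟨hpos, _⟩
      linarith
  · intro a ha
    have haI : (0:ℝ) < a := lt_trans hx0 ha
    have hlt : g a < g x0 := hg hx0 haI ha
    filter_upwards [hτ, hv.eventually_const_lt hlt] with ε ⟨hpos, heq⟩ h2
    by_contra hcon
    push_neg at hcon
    rcases lt_or_eq_of_le hcon with h | h
    · have := hg haI hpos h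
      rw [heq] at this; linarith
    · rw [← h] at heq; rw [← heq] at h2; linarith

/-- expression (A.46): lim_{ε → 0⁺} c(ε) = 1/φ(σ_{b,0}), where
c(ε) = ε⁻¹ log(σ_{b,ε}/γ_{b,ε}) and σ_{b,0} = g⁻¹(b). -/
theorem stmt14 (ρ : ℝ → ℝ)
    (hρ_meas : Measurable ρ)
    (hρ_even : ∀ u, ρ (-u) = ρ u)
    (hρ_mono : MonotoneOn ρ (Set.Ici 0))
    (hρ_zero : ρ 0 = 0)
    (hρ_bdd : ∀ u, 0 ≤ ρ u ∧ ρ u ≤ 1)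
    (hρ_lim : Tendsto ρ atTop (nhds 1))
    (g : ℝ → ℝ)
    (hg : ∀ s, 0 < s → g s = ∫ z, ρ (z / s) ∂(gaussianReal 0 1))
    -- Condition (A4):
    (g' : ℝ → ℝ)
    (hg_deriv : ∀ s ∈ Set.Ioi (0 : ℝ), HasDerivAt g (g' s) s)
    (hg'_cont : ContinuousOn g' (Set.Ioi 0))
    (φ : ℝ → ℝ) (hφ : ∀ s, φ s = -s * g' s)
    (hφ_pos : ∀ s ∈ Set.Ioi (0 : ℝ), 0 < φ s)
    (σM : ℝ) (hσM : 0 < σM)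
    (hφ_mono : MonotoneOn φ (Set.Ioc 0 σM))
    (hφ_anti : AntitoneOn φ (Set.Ici σM))
    (b : ℝ) (hb0 : 0 < b) (hb1 : b < 1)
    (σb γb : ℝ → ℝ)
    (hσb : ∀ ε ∈ Set.Ico (0 : ℝ) b, 0 < σb ε ∧ g (σb ε) = (b - ε) / (1 - ε))
    (hγb : ∀ ε ∈ Set.Ico (0 : ℝ) b, 0 < γb ε ∧ g (γb ε) = b / (1 - ε)) :
    Tendsto (fun ε => ε⁻¹ * Real.log (σb ε / γb ε))
      (nhdsWithin 0 (Set.Ioi 0)) (nhds (1 / φ (σb 0))) := by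
  classical
  set l := nhdsWithin (0:ℝ) (Set.Ioi 0) with hl
  -- g' is negative on Ioi 0
  have hg'_neg : ∀ s ∈ Set.Ioi (0:ℝ), g' s < 0 := by
    intro s hs
    have h := hφ_pos s hs
    rw [hφ s] at h
    have hs' : (0:ℝ) < s := hs
    nlinarith
  -- g strictly decreasing on Ioi 0
  have hg_anti : StrictAntiOn g (Set.Ioi 0) := by
    apply strictAntiOn_of_deriv_neg (convex_Ioi 0)
    · intro x hx
      exact ((hg_deriv x hx).continuousAt).continuousWithinAt
    · intro x hx
      rw [interior_Ioi] at hx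
      rw [(hg_deriv x hx).deriv]
      exact hg'_neg x hx
  -- basic facts at ε = 0
  have h0 : (0:ℝ) ∈ Set.Ico (0:ℝ) b := ⟨le_refl _, hb0⟩
  obtain ⟨hσ0_pos, hσ0_eq⟩ := hσb 0 h0
  have hgσ0 : g (σb 0) = b := by rw [hσ0_eq]; norm_num
  have hφσ0_pos : 0 < φ (σb 0) := hφ_pos _ hσ0_pos
  -- eventually ε ∈ Ioo 0 b
  have hev : ∀ᶠ ε in l, ε ∈ Set.Ioo 0 b := by
    have h1 : ∀ᶠ ε in l, ε < b :=
      mem_nhdsWithin_of_mem_nhds (Iio_mem_nhds hb0)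
    have h2 : ∀ᶠ ε in l, 0 < ε := self_mem_nhdsWithin
    filter_upwards [h1, h2] with ε h1 h2 using ⟨h2, h1⟩
  -- key: Cauchy MVT
  have key : ∀ ε ∈ Set.Ioo (0:ℝ) b, ∃ x, x ∈ Set.Ioo (γb ε) (σb ε) ∧
      ε⁻¹ * Real.log (σb ε / γb ε) = (1-ε)⁻¹ * (φ x)⁻¹ := by
    intro ε hε
    obtain ⟨hε0, hεb⟩ := hε
    have hεI : ε ∈ Set.Ico (0:ℝ) b := ⟨le_of_lt hε0, hεb⟩
    obtain ⟨hσ_pos, hσ_eq⟩ := hσb ε hεI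
    obtain ⟨hγ_pos, hγ_eq⟩ := hγb ε hεI
    have h1ε : (0:ℝ) < 1 - ε := by linarith
    have hvlt : (b - ε) / (1 - ε) < b / (1 - ε) := by
      apply div_lt_div_of_pos_right ?_ h1ε
      linarith
    have hγσ : γb ε < σb ε := by
      by_contra hcon
      push_neg at hcon
      rcases lt_or_eq_of_le hcon with h | h
      · have := hg_anti hσ_pos hγ_pos h
        rw [hσ_eq, hγ_eq] at this; linarith
      · rw [h] at hσ_eq; rw [hγ_eq] at hσ_eq; linarith
    have hsub : Set.Icc (γb ε) (σb ε) ⊆ Set.Ioi 0 := fun x hx => lt_of_lt_of_le hγ_pos hx.1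
    obtain ⟨c, hcmem, hceq⟩ := exists_ratio_hasDerivAt_eq_ratio_slope g g' hγσ
      (fun x hx => ((hg_deriv x (hsub hx)).continuousAt).continuousWithinAt)
      (fun x hx => hg_deriv x (hsub (Set.mem_Icc_of_Ioo hx)))
      Real.log (fun x => x⁻¹)
      (Real.continuousOn_log.mono (fun x hx => ne_of_gt (hsub hx)))
      (fun x hx => Real.hasDerivAt_log (ne_of_gt (hsub (Set.mem_Icc_of_Ioo hx))))
    refine ⟨c, hcmem, ?_⟩
    have hc_pos : 0 < c := lt_trans hγ_pos hcmem.1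
    have hg'c : g' c < 0 := hg'_neg c hc_pos
    have hφc : φ c = -c * g' c := hφ c
    rw [hσ_eq, hγ_eq] at hceq
    rw [Real.log_div (ne_of_gt hσ_pos) (ne_of_gt hγ_pos), hφc]
    have hcne : c ≠ 0 := ne_of_gt hc_pos
    have hg'cne : g' c ≠ 0 := ne_of_lt hg'c
    have hεne : ε ≠ 0 := ne_of_gt hε0
    have h1εne : (1:ℝ) - ε ≠ 0 := ne_of_gt h1ε
    field_simp at hceq ⊢
    nlinarith [hceq, sq_nonneg c, sq_nonneg (g' c)]
  -- choice function
  set ξ : ℝ → ℝ := fun ε => if h : ε ∈ Set.Ioo (0:ℝ) b then (key ε h).choose else σb 0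
    with hξdef
  have hξ_spec : ∀ ε (h : ε ∈ Set.Ioo (0:ℝ) b), ξ ε ∈ Set.Ioo (γb ε) (σb ε) ∧
      ε⁻¹ * Real.log (σb ε / γb ε) = (1-ε)⁻¹ * (φ (ξ ε))⁻¹ := by
    intro ε h
    simp only [hξdef, dif_pos h]
    exact (key ε h).choose_spec
  -- tendsto of σb and γb
  have hvσ : Tendsto (fun ε => (b - ε) / (1 - ε)) l (nhds (g (σb 0))) := by
    rw [hgσ0]
    have : Tendsto (fun ε : ℝ => (b - ε) / (1 - ε)) (nhds 0) (nhds ((b - 0)/(1 - 0))) := by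
      apply Tendsto.div
      · exact tendsto_const_nhds.sub tendsto_id
      · exact tendsto_const_nhds.sub tendsto_id
      · norm_num
    simp only [sub_zero, div_one] at this
    exact this.mono_left nhdsWithin_le_nhds
  have hvγ : Tendsto (fun ε => b / (1 - ε)) l (nhds (g (σb 0))) := by
    rw [hgσ0]
    have : Tendsto (fun ε : ℝ => b / (1 - ε)) (nhds 0) (nhds (b/(1 - 0))) := by
      apply Tendsto.div tendsto_const_nhds
      · exact tendsto_const_nhds.sub tendsto_id
      · norm_num
    simp only [sub_zero, div_one] at this
    exact this.mono_left nhdsWithin_le_nhds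
  have hσ_tend : Tendsto σb l (nhds (σb 0)) := by
    apply aux_tendsto_inv g hg_anti (σb 0) hσ0_pos σb _ _ hvσ
    filter_upwards [hev] with ε hε
    exact hσb ε ⟨le_of_lt hε.1, hε.2⟩
  have hγ_tend : Tendsto γb l (nhds (σb 0)) := by
    apply aux_tendsto_inv g hg_anti (σb 0) hσ0_pos γb _ _ hvγ
    filter_upwards [hev] with ε hε
    exact hγb ε ⟨le_of_lt hε.1, hε.2⟩
  -- ξ tends to σb 0
  have hξ_tend : Tendsto ξ l (nhds (σb 0)) := by
    apply tendsto_of_tendsto_of_tendsto_of_le_of_le' hγ_tend hσ_tend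
    · filter_upwards [hev] with ε hε using le_of_lt (hξ_spec ε hε).1.1
    · filter_upwards [hev] with ε hε using le_of_lt (hξ_spec ε hε).1.2
  -- φ continuous at σb 0
  have hφ_cont : ContinuousAt φ (σb 0) := by
    have : ContinuousOn φ (Set.Ioi 0) := by
      have : ContinuousOn (fun s => -s * g' s) (Set.Ioi 0) :=
        (continuousOn_neg.mul hg'_cont)
      exact this.congr (fun s _ => hφ s)
    exact this.continuousAt (isOpen_Ioi.mem_nhds hσ0_pos)
  have hinv_tend : Tendsto (fun ε => (φ (ξ ε))⁻¹) l (nhds ((φ (σb 0))⁻¹)) :=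
    (Tendsto.inv₀ (hφ_cont.tendsto.comp hξ_tend) (ne_of_gt hφσ0_pos))
  have h1ε_tend : Tendsto (fun ε : ℝ => (1 - ε)⁻¹) l (nhds 1) := by
    have : Tendsto (fun ε : ℝ => (1 - ε)⁻¹) (nhds 0) (nhds ((1 - 0:ℝ)⁻¹)) := by
      apply Tendsto.inv₀ (tendsto_const_nhds.sub tendsto_id)
      norm_num
    norm_num at this
    exact this.mono_left nhdsWithin_le_nhds
  have hfinal : Tendsto (fun ε => (1-ε)⁻¹ * (φ (ξ ε))⁻¹) l (nhds (1 * (φ (σb 0))⁻¹)) :=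
    h1ε_tend.mul hinv_tend
  rw [one_mul] at hfinal
  rw [one_div]
  apply Tendsto.congr' _ hfinal
  filter_upwards [hev] with ε hε
  exact ((hξ_spec ε hε).2).symm
end

section
/- Let ρ satisfy (A3) and suppose g satisfies (A4). Then φ(s) → 0 as s → 0⁺ and φ(s) → 0 as s → ∞. Moreover, for any ε ∈ [0, 1) and c > 0 with c(1−ε)K > 1, the function A_{c,ε}(s) = c(1−ε)g(s) + log s satisfies: A_{c,ε}(s) → −∞ as s → 0⁺, A_{c,ε}(s) → +∞ as s → ∞, and, setting σ_L = inf{s > 0 : c(1−ε)φ(s) ≥ 1} and σ_U = sup{s > 0 : c(1−ε)φ(s) ≥ 1}, one has 0 < σ_L ≤ σ_M ≤ σ_U < ∞ and A_{c,ε} is nondecreasing on (0, σ_L], nonincreasing on [σ_L, σ_U], and nondecreasing on [σ_U, ∞). -/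
open MeasureTheory ProbabilityTheory Filter Set

/-- Under (A3) and (A4), φ(s) → 0 as s → 0⁺ and as s → ∞; and for
ε ∈ [0,1) and c > 0 with c(1−ε)K > 1, the function A_{c,ε}(s) = c(1−ε)g(s) + log s
tends to −∞ at 0⁺ and to +∞ at ∞, and with
σ_L = inf{s > 0 : c(1−ε)φ(s) ≥ 1} and σ_U = sup{s > 0 : c(1−ε)φ(s) ≥ 1} one has
0 < σ_L ≤ σ_M ≤ σ_U < ∞ (the set is bounded above) and A_{c,ε} is nondecreasing on
(0, σ_L], nonincreasing on [σ_L, σ_U] and nondecreasing on [σ_U, ∞). -/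
theorem stmt17 (ρ : ℝ → ℝ)
    (hρ_meas : Measurable ρ)
    (hρ_even : ∀ u, ρ (-u) = ρ u)
    (hρ_mono : MonotoneOn ρ (Set.Ici 0))
    (hρ_zero : ρ 0 = 0)
    (hρ_bdd : ∀ u, 0 ≤ ρ u ∧ ρ u ≤ 1)
    (hρ_lim : Tendsto ρ atTop (nhds 1))
    (g : ℝ → ℝ)
    (hg : ∀ s, 0 < s → g s = ∫ z, ρ (z / s) ∂(gaussianReal 0 1))
    -- Condition (A4):
    (g' : ℝ → ℝ)
    (hg_deriv : ∀ s ∈ Set.Ioi (0 : ℝ), HasDerivAt g (g' s) s)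
    (hg'_cont : ContinuousOn g' (Set.Ioi 0))
    (φ : ℝ → ℝ) (hφ : ∀ s, φ s = -s * g' s)
    (hφ_pos : ∀ s ∈ Set.Ioi (0 : ℝ), 0 < φ s)
    (σM : ℝ) (hσM : 0 < σM)
    (hφ_mono : MonotoneOn φ (Set.Ioc 0 σM))
    (hφ_anti : AntitoneOn φ (Set.Ici σM))
    (K : ℝ) (hK : K = φ σM)
    (ε c : ℝ) (hε0 : 0 ≤ ε) (hε1 : ε < 1) (hc : 0 < c)
    (hcK : 1 < c * (1 - ε) * K)
    (A : ℝ → ℝ) (hA : ∀ s, A s = c * (1 - ε) * g s + Real.log s)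
    (S : Set ℝ) (hS : S = {s : ℝ | 0 < s ∧ 1 ≤ c * (1 - ε) * φ s})
    (σL σU : ℝ) (hσL : σL = sInf S) (hσU : σU = sSup S) :
    Tendsto φ (nhdsWithin 0 (Set.Ioi 0)) (nhds 0) ∧
    Tendsto φ atTop (nhds 0) ∧
    Tendsto A (nhdsWithin 0 (Set.Ioi 0)) atBot ∧
    Tendsto A atTop atTop ∧
    BddAbove S ∧ 0 < σL ∧ σL ≤ σM ∧ σM ≤ σU ∧
    MonotoneOn A (Set.Ioc 0 σL) ∧
    AntitoneOn A (Set.Icc σL σU) ∧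
    MonotoneOn A (Set.Ici σU) := by
  have hb0 : 0 < c * (1 - ε) := mul_pos hc (by linarith)
  set b := c * (1 - ε) with hbdef
  -- bounds on g
  have hg01 : ∀ s : ℝ, 0 < s → 0 ≤ g s ∧ g s ≤ 1 := by
    intro s hs
    rw [hg s hs]
    have hmeas : AEStronglyMeasurable (fun z : ℝ => ρ (z / s)) (gaussianReal 0 1) :=
      (hρ_meas.comp (measurable_id.div_const s)).aestronglyMeasurable
    have hint : Integrable (fun z : ℝ => ρ (z / s)) (gaussianReal 0 1) := by
      refine (integrable_const (1 : ℝ)).mono' hmeas ?_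
      filter_upwards with z
      rw [Real.norm_eq_abs, abs_of_nonneg (hρ_bdd _).1]
      exact (hρ_bdd _).2
    refine ⟨integral_nonneg fun z => (hρ_bdd _).1, ?_⟩
    calc (∫ z, ρ (z / s) ∂(gaussianReal 0 1)) ≤ ∫ _, (1 : ℝ) ∂(gaussianReal 0 1) :=
          integral_mono hint (integrable_const 1) fun z => (hρ_bdd _).2
      _ = 1 := by simp
  have hg'eq : ∀ s : ℝ, 0 < s → g' s = -(φ s) / s := by
    intro s hs
    rw [hφ s]
    field_simp
  -- the infimum of φ near 0 (resp near ∞) is 0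
  have hinf0 : ∀ δ : ℝ, 0 < δ → ∃ s ∈ Set.Ioc (0 : ℝ) σM, φ s < δ := by
    intro δ hδ
    by_contra hcon
    push_neg at hcon
    have hhd : ∀ s : ℝ, 0 < s →
        HasDerivAt (fun u => g u + δ * Real.log u) (g' s + δ * s⁻¹) s := fun s hs =>
      (hg_deriv s hs).add ((Real.hasDerivAt_log hs.ne').const_mul δ)
    have hanti : AntitoneOn (fun u => g u + δ * Real.log u) (Set.Ioc 0 σM) := by
      apply antitoneOn_of_deriv_nonpos (convex_Ioc 0 σM)
      · intro s hs; exact (hhd s hs.1).continuousAt.continuousWithinAt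
      · rw [interior_Ioc]; intro s hs
        exact (hhd s hs.1).differentiableAt.differentiableWithinAt
      · rw [interior_Ioc]; intro s hs
        rw [(hhd s hs.1).deriv]
        have h1 : δ ≤ φ s := hcon s ⟨hs.1, hs.2.le⟩
        have h2 : g' s + δ * s⁻¹ = (δ - φ s) / s := by
          rw [hg'eq s hs.1]; field_simp; ring
        rw [h2]
        exact div_nonpos_iff.2 (Or.inr ⟨by linarith, hs.1.le⟩)
    set t : ℝ := min σM (Real.exp ((g σM + δ * Real.log σM - 2) / δ)) with htdef
    have ht0 : 0 < t := lt_min hσM (Real.exp_pos _)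
    have htM : t ≤ σM := min_le_left _ _
    have hlogt : Real.log t ≤ (g σM + δ * Real.log σM - 2) / δ := by
      calc Real.log t ≤ Real.log (Real.exp ((g σM + δ * Real.log σM - 2) / δ)) :=
            Real.log_le_log ht0 (min_le_right _ _)
        _ = (g σM + δ * Real.log σM - 2) / δ := Real.log_exp _
    have h5 := hanti ⟨ht0, htM⟩ ⟨hσM, le_refl σM⟩ htM
    simp only at h5
    have h6 : δ * Real.log t ≤ g σM + δ * Real.log σM - 2 := by
      have h7 := mul_le_mul_of_nonneg_left hlogt hδ.le
      have h8 : δ * ((g σM + δ * Real.log σM - 2) / δ) = g σM + δ * Real.log σM - 2 := by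
        field_simp
      linarith
    linarith [(hg01 t ht0).2, h5, h6]
  have hinfT : ∀ δ : ℝ, 0 < δ → ∃ s, σM ≤ s ∧ φ s < δ := by
    intro δ hδ
    by_contra hcon
    push_neg at hcon
    have hhd : ∀ s : ℝ, 0 < s →
        HasDerivAt (fun u => g u + δ * Real.log u) (g' s + δ * s⁻¹) s := fun s hs =>
      (hg_deriv s hs).add ((Real.hasDerivAt_log hs.ne').const_mul δ)
    have hanti : AntitoneOn (fun u => g u + δ * Real.log u) (Set.Ici σM) := by
      apply antitoneOn_of_deriv_nonpos (convex_Ici σM)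
      · intro s hs; exact (hhd s (lt_of_lt_of_le hσM hs)).continuousAt.continuousWithinAt
      · rw [interior_Ici]; intro s hs
        exact (hhd s (hσM.trans hs)).differentiableAt.differentiableWithinAt
      · rw [interior_Ici]; intro s hs
        have hs0 : 0 < s := hσM.trans hs
        rw [(hhd s hs0).deriv]
        have h1 : δ ≤ φ s := hcon s hs.le
        have h2 : g' s + δ * s⁻¹ = (δ - φ s) / s := by
          rw [hg'eq s hs0]; field_simp; ring
        rw [h2]
        exact div_nonpos_iff.2 (Or.inr ⟨by linarith, hs0.le⟩)
    set t : ℝ := max σM (Real.exp ((g σM + δ * Real.log σM + 2) / δ)) with htdef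
    have htM : σM ≤ t := le_max_left _ _
    have ht0 : 0 < t := hσM.trans_le htM
    have hlogt : (g σM + δ * Real.log σM + 2) / δ ≤ Real.log t := by
      calc (g σM + δ * Real.log σM + 2) / δ
          = Real.log (Real.exp ((g σM + δ * Real.log σM + 2) / δ)) := (Real.log_exp _).symm
        _ ≤ Real.log t := Real.log_le_log (Real.exp_pos _) (le_max_right _ _)
    have h5 := hanti Set.self_mem_Ici htM htM
    simp only at h5
    have h6 : g σM + δ * Real.log σM + 2 ≤ δ * Real.log t := by
      have h7 := mul_le_mul_of_nonneg_left hlogt hδ.le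
      have h8 : δ * ((g σM + δ * Real.log σM + 2) / δ) = g σM + δ * Real.log σM + 2 := by
        field_simp
      linarith
    linarith [(hg01 t ht0).1, (hg01 σM hσM).1, h5, h6]
  -- limits of φ
  have hφ0 : Tendsto φ (nhdsWithin 0 (Set.Ioi 0)) (nhds 0) := by
    rw [Metric.tendsto_nhdsWithin_nhds]
    intro e he
    obtain ⟨s0, hs0, hφs0⟩ := hinf0 e he
    refine ⟨s0, hs0.1, ?_⟩
    intro x hx hdx
    rw [Real.dist_eq, sub_zero] at hdx ⊢
    have hxpos : (0 : ℝ) < x := hx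
    have hxs0 : x ≤ s0 := by rw [abs_of_pos hxpos] at hdx; exact hdx.le
    have hle : φ x ≤ φ s0 := hφ_mono ⟨hxpos, hxs0.trans hs0.2⟩ hs0 hxs0
    rw [abs_of_pos (hφ_pos x hx)]
    linarith
  have hphiT : Tendsto φ atTop (nhds 0) := by
    rw [Metric.tendsto_atTop]
    intro e he
    obtain ⟨s1, hs1, hφs1⟩ := hinfT e he
    refine ⟨s1, fun s hs => ?_⟩
    rw [Real.dist_eq, sub_zero,
      abs_of_pos (hφ_pos s (lt_of_lt_of_le hσM (hs1.trans hs)))]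
    have hle : φ s ≤ φ s1 := hφ_anti hs1 (hs1.trans hs) hs
    linarith
  -- limits of A
  have hA0 : Tendsto A (nhdsWithin 0 (Set.Ioi 0)) atBot := by
    refine tendsto_atBot_mono' _ ?_
      (tendsto_atBot_add_const_left _ b Real.tendsto_log_nhdsGT_zero)
    filter_upwards [self_mem_nhdsWithin] with s hs
    rw [hA s]
    have h1 := (hg01 s hs).2
    have h2 := mul_le_mul_of_nonneg_left h1 hb0.le
    simp only [mul_one] at h2
    linarith
  have hAtop : Tendsto A atTop atTop := by
    refine tendsto_atTop_mono' atTop ?_ Real.tendsto_log_atTop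
    filter_upwards [eventually_gt_atTop (0 : ℝ)] with s hs
    rw [hA s]
    have h1 := mul_nonneg hb0.le (hg01 s hs).1
    linarith
  -- the set S
  have hσMS : σM ∈ S := by
    rw [hS]
    refine ⟨hσM, ?_⟩
    rw [hK] at hcK
    linarith
  have hSne : S.Nonempty := ⟨σM, hσMS⟩
  obtain ⟨s1, hs1M, hφs1⟩ := hinfT b⁻¹ (inv_pos.mpr hb0)
  have hub : s1 ∈ upperBounds S := by
    intro s hsS
    by_contra hgt
    push_neg at hgt
    rw [hS] at hsS
    have h1 : φ s ≤ φ s1 := hφ_anti hs1M (hs1M.trans hgt.le) hgt.le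
    have h2 : b * φ s < 1 :=
      calc b * φ s ≤ b * φ s1 := mul_le_mul_of_nonneg_left h1 hb0.le
        _ < b * b⁻¹ := (mul_lt_mul_iff_right₀ hb0).2 hφs1
        _ = 1 := mul_inv_cancel₀ hb0.ne'
    linarith [hsS.2]
  have hbddA : BddAbove S := ⟨s1, hub⟩
  obtain ⟨s0, hs0, hφs0⟩ := hinf0 b⁻¹ (inv_pos.mpr hb0)
  have hlb : s0 ∈ lowerBounds S := by
    intro s hsS
    by_contra hgt
    push_neg at hgt
    rw [hS] at hsS
    have h1 : φ s ≤ φ s0 := hφ_mono ⟨hsS.1, hgt.le.trans hs0.2⟩ hs0 hgt.le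
    have h2 : b * φ s < 1 :=
      calc b * φ s ≤ b * φ s0 := mul_le_mul_of_nonneg_left h1 hb0.le
        _ < b * b⁻¹ := (mul_lt_mul_iff_right₀ hb0).2 hφs0
        _ = 1 := mul_inv_cancel₀ hb0.ne'
    linarith [hsS.2]
  have hbddB : BddBelow S := ⟨s0, hlb⟩
  have hσL0 : 0 < σL := by
    have : s0 ≤ sInf S := le_csInf hSne hlb
    rw [hσL]; exact lt_of_lt_of_le hs0.1 this
  have hσLM : σL ≤ σM := by rw [hσL]; exact csInf_le hbddB hσMS
  have hσMU : σM ≤ σU := by rw [hσU]; exact le_csSup hbddA hσMS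
  -- derivative of A
  have hAfun : A = fun s => b * g s + Real.log s := funext hA
  have hAd : ∀ s : ℝ, 0 < s → HasDerivAt A ((1 - b * φ s) / s) s := by
    intro s hs
    have h1 : HasDerivAt A (b * g' s + s⁻¹) s := by
      rw [hAfun]
      exact ((hg_deriv s hs).const_mul b).add (Real.hasDerivAt_log hs.ne')
    convert h1 using 1
    rw [hφ s]
    field_simp
    ring
  have hmono1 : MonotoneOn A (Set.Ioc 0 σL) := by
    apply monotoneOn_of_deriv_nonneg (convex_Ioc 0 σL)
    · intro s hs; exact (hAd s hs.1).continuousAt.continuousWithinAt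
    · rw [interior_Ioc]; intro s hs
      exact (hAd s hs.1).differentiableAt.differentiableWithinAt
    · rw [interior_Ioc]; intro s hs
      rw [(hAd s hs.1).deriv]
      apply div_nonneg _ hs.1.le
      have hsnot : s ∉ S := by
        intro hmem
        have : σL ≤ s := by rw [hσL]; exact csInf_le hbddB hmem
        linarith [hs.2]
      rw [hS] at hsnot
      simp only [Set.mem_setOf_eq, not_and, not_le] at hsnot
      linarith [hsnot hs.1]
  have hkey : ∀ s : ℝ, σL < s → s < σU → 1 ≤ b * φ s := by
    intro s h1 h2
    rcases le_or_gt s σM with hsM | hsM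
    · rw [hσL] at h1
      obtain ⟨t, htS, hts⟩ := exists_lt_of_csInf_lt hSne h1
      rw [hS] at htS
      have hle : φ t ≤ φ s := hφ_mono ⟨htS.1, hts.le.trans hsM⟩ ⟨htS.1.trans hts, hsM⟩ hts.le
      calc (1 : ℝ) ≤ b * φ t := htS.2
        _ ≤ b * φ s := mul_le_mul_of_nonneg_left hle hb0.le
    · rw [hσU] at h2
      obtain ⟨t, htS, hts⟩ := exists_lt_of_lt_csSup hSne h2
      rw [hS] at htS
      have hle : φ t ≤ φ s := hφ_anti hsM.le (hsM.le.trans hts.le) hts.le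
      calc (1 : ℝ) ≤ b * φ t := htS.2
        _ ≤ b * φ s := mul_le_mul_of_nonneg_left hle hb0.le
  have hanti2 : AntitoneOn A (Set.Icc σL σU) := by
    apply antitoneOn_of_deriv_nonpos (convex_Icc σL σU)
    · intro s hs; exact (hAd s (lt_of_lt_of_le hσL0 hs.1)).continuousAt.continuousWithinAt
    · rw [interior_Icc]; intro s hs
      exact (hAd s (hσL0.trans hs.1)).differentiableAt.differentiableWithinAt
    · rw [interior_Icc]; intro s hs
      rw [(hAd s (hσL0.trans hs.1)).deriv]
      exact div_nonpos_iff.2 (Or.inr ⟨by linarith [hkey s hs.1 hs.2], (hσL0.trans hs.1).le⟩)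
  have hσU0 : 0 < σU := lt_of_lt_of_le hσM hσMU
  have hmono3 : MonotoneOn A (Set.Ici σU) := by
    apply monotoneOn_of_deriv_nonneg (convex_Ici σU)
    · intro s hs; exact (hAd s (lt_of_lt_of_le hσU0 hs)).continuousAt.continuousWithinAt
    · rw [interior_Ici]; intro s hs
      exact (hAd s (hσU0.trans hs)).differentiableAt.differentiableWithinAt
    · rw [interior_Ici]; intro s hs
      rw [(hAd s (hσU0.trans hs)).deriv]
      apply div_nonneg _ (hσU0.trans hs).le
      have hsnot : s ∉ S := by
        intro hmem
        have h9 : s ≤ σU := by rw [hσU]; exact le_csSup hbddA hmem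
        exact absurd h9 (not_le.2 hs)
      rw [hS] at hsnot
      simp only [Set.mem_setOf_eq, not_and, not_le] at hsnot
      linarith [hsnot (hσU0.trans hs)]
  exact ⟨hφ0, hphiT, hA0, hAtop, hbddA, hσL0, hσLM, hσMU, hmono1, hanti2, hmono3⟩
end
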